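/- arXiv:1905.00922 — 3 statements merged into one kernel-verified Lean document; each statement's English description precedes it below -/
import Mathlib

section
/- If term substitutions γ1, γ2 are indistinguishable with respect to policy P (they respect δ_P(Γ_P), map each declassifier variable x_f to the policy function f, and map all other input variables to pairs of values indistinguishable at their public-view types), then (γ1, γ2) is in the logical relation V⟦Γ_P⟧ρ_P on substitutions, i.e., for every x in dom(Γ_P), (γ1(x), γ2(x)) ∈ V⟦Γ_P(x)⟧ρ_P. -/
namespace STLC

/-- Types of the simply typed lambda calculus with type variables:
`τ ::= int | α | τ×τ | τ→τ`. -/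
inductive Ty : Type where
  | int : Ty
  | tvar (a : ℕ) : Ty
  | prod (t₁ t₂ : Ty) : Ty
  | arrow (t₁ t₂ : Ty) : Ty

/-- Terms; `prim f` is a primitive binary arithmetic operator `⊕`. -/
inductive Tm : Type where
  | var (x : ℕ) : Tm
  | lit (n : ℤ) : Tm
  | pair (e₁ e₂ : Tm) : Tm
  | fst (e : Tm) : Tm
  | snd (e : Tm) : Tm
  | lam (x : ℕ) (τ : Ty) (b : Tm) : Tm
  | app (e₁ e₂ : Tm) : Tm
  | prim (f : ℤ → ℤ → ℤ) (e₁ e₂ : Tm) : Tm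

/-- `τ` is well-formed w.r.t. the type context `Δ`: all its type variables are in `Δ`. -/
def Ty.wf (Δ : Set ℕ) : Ty → Prop
  | .int => True
  | .tvar a => a ∈ Δ
  | .prod t₁ t₂ => t₁.wf Δ ∧ t₂.wf Δ
  | .arrow t₁ t₂ => t₁.wf Δ ∧ t₂.wf Δ

/-- A type is closed when it has no type variables. -/
def Ty.closed (τ : Ty) : Prop := τ.wf ∅

/-- Apply a type substitution `δ` to a type. -/
def Ty.subst (δ : ℕ → Ty) : Ty → Ty
  | .int => .int
  | .tvar a => δ a
  | .prod t₁ t₂ => .prod (t₁.subst δ) (t₂.subst δ)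
  | .arrow t₁ t₂ => .arrow (t₁.subst δ) (t₂.subst δ)

/-- Apply a type substitution to the type annotations of a term. -/
def Tm.tsubst (δ : ℕ → Ty) : Tm → Tm
  | .var x => .var x
  | .lit n => .lit n
  | .pair e₁ e₂ => .pair (e₁.tsubst δ) (e₂.tsubst δ)
  | .fst e => .fst (e.tsubst δ)
  | .snd e => .snd (e.tsubst δ)
  | .lam x τ b => .lam x (τ.subst δ) (b.tsubst δ)
  | .app e₁ e₂ => .app (e₁.tsubst δ) (e₂.tsubst δ)
  | .prim f e₁ e₂ => .prim f (e₁.tsubst δ) (e₂.tsubst δ)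

/-- Simultaneous substitution of (closed) terms for free term variables. -/
def Tm.msubst (γ : ℕ → Option Tm) : Tm → Tm
  | .var x => (γ x).getD (.var x)
  | .lit n => .lit n
  | .pair e₁ e₂ => .pair (e₁.msubst γ) (e₂.msubst γ)
  | .fst e => .fst (e.msubst γ)
  | .snd e => .snd (e.msubst γ)
  | .lam x τ b => .lam x τ (b.msubst fun y => if y = x then none else γ y)
  | .app e₁ e₂ => .app (e₁.msubst γ) (e₂.msubst γ)
  | .prim f e₁ e₂ => .prim f (e₁.msubst γ) (e₂.msubst γ)

/-- `e[x ↦ v]`. -/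
def Tm.subst1 (x : ℕ) (v : Tm) (e : Tm) : Tm :=
  e.msubst fun y => if y = x then some v else none

/-- Values. -/
inductive IsValue : Tm → Prop
  | lit (n : ℤ) : IsValue (.lit n)
  | pair {v₁ v₂ : Tm} : IsValue v₁ → IsValue v₂ → IsValue (.pair v₁ v₂)
  | lam (x : ℕ) (τ : Ty) (b : Tm) : IsValue (.lam x τ b)

/-- Call-by-value small-step reduction. -/
inductive Step : Tm → Tm → Prop
  | beta {x τ b v} : IsValue v → Step (.app (.lam x τ b) v) (Tm.subst1 x v b)
  | fstPair {v₁ v₂} : IsValue v₁ → IsValue v₂ → Step (.fst (.pair v₁ v₂)) v₁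
  | sndPair {v₁ v₂} : IsValue v₁ → IsValue v₂ → Step (.snd (.pair v₁ v₂)) v₂
  | primOp (f : ℤ → ℤ → ℤ) (n₁ n₂ : ℤ) : Step (.prim f (.lit n₁) (.lit n₂)) (.lit (f n₁ n₂))
  | pairL {e₁ e₁' e₂} : Step e₁ e₁' → Step (.pair e₁ e₂) (.pair e₁' e₂)
  | pairR {v₁ e₂ e₂'} : IsValue v₁ → Step e₂ e₂' → Step (.pair v₁ e₂) (.pair v₁ e₂')
  | fstC {e e'} : Step e e' → Step (.fst e) (.fst e')
  | sndC {e e'} : Step e e' → Step (.snd e) (.snd e')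
  | appL {e₁ e₁' e₂} : Step e₁ e₁' → Step (.app e₁ e₂) (.app e₁' e₂)
  | appR {v₁ e₂ e₂'} : IsValue v₁ → Step e₂ e₂' → Step (.app v₁ e₂) (.app v₁ e₂')
  | primL {f e₁ e₁' e₂} : Step e₁ e₁' → Step (.prim f e₁ e₂) (.prim f e₁' e₂)
  | primR {f v₁ e₂ e₂'} : IsValue v₁ → Step e₂ e₂' → Step (.prim f v₁ e₂) (.prim f v₁ e₂')

/-- `⇝*`: reflexive transitive closure of the reduction relation. -/
def Steps : Tm → Tm → Prop := Relation.ReflTransGen Step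

/-- Term contexts. -/
abbrev Ctx : Type := ℕ → Option Ty

def Ctx.empty : Ctx := fun _ => none

def Ctx.update (Γ : Ctx) (x : ℕ) (τ : Ty) : Ctx := fun y => if y = x then some τ else Γ y

/-- Apply a type substitution to the range of a term context. -/
def Ctx.tsubst (δ : ℕ → Ty) (Γ : Ctx) : Ctx := fun x => (Γ x).map (Ty.subst δ)

/-- The typing judgment `Δ, Γ ⊢ e : τ`. -/
inductive HasTy : Set ℕ → Ctx → Tm → Ty → Prop
  | var {Δ Γ x τ} : Γ x = some τ → HasTy Δ Γ (.var x) τ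
  | lit {Δ Γ} (n : ℤ) : HasTy Δ Γ (.lit n) .int
  | pair {Δ Γ e₁ e₂ τ₁ τ₂} : HasTy Δ Γ e₁ τ₁ → HasTy Δ Γ e₂ τ₂ →
      HasTy Δ Γ (.pair e₁ e₂) (.prod τ₁ τ₂)
  | fst {Δ Γ e τ₁ τ₂} : HasTy Δ Γ e (.prod τ₁ τ₂) → HasTy Δ Γ (.fst e) τ₁
  | snd {Δ Γ e τ₁ τ₂} : HasTy Δ Γ e (.prod τ₁ τ₂) → HasTy Δ Γ (.snd e) τ₂
  | lam {Δ Γ x τ₁ b τ₂} : Ty.wf Δ τ₁ → HasTy Δ (Ctx.update Γ x τ₁) b τ₂ →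
      HasTy Δ Γ (.lam x τ₁ b) (.arrow τ₁ τ₂)
  | app {Δ Γ e₁ e₂ τ₁ τ₂} : HasTy Δ Γ e₁ (.arrow τ₁ τ₂) → HasTy Δ Γ e₂ τ₁ →
      HasTy Δ Γ (.app e₁ e₂) τ₂
  | prim {Δ Γ} (f : ℤ → ℤ → ℤ) {e₁ e₂} : HasTy Δ Γ e₁ .int → HasTy Δ Γ e₂ .int →
      HasTy Δ Γ (.prim f e₁ e₂) .int

/-- `v` is a closed value of (closed) type `τ`. -/
def ClosedVal (τ : Ty) (v : Tm) : Prop := IsValue v ∧ HasTy ∅ Ctx.empty v τ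

/-- Binary relations on terms. -/
abbrev Rel : Type := Tm → Tm → Prop

/-- `R ∈ Rel(τ₁, τ₂)`: a binary relation on closed values of closed types `τ₁`, `τ₂`. -/
def RelOn (τ₁ τ₂ : Ty) (R : Rel) : Prop :=
  Ty.closed τ₁ ∧ Ty.closed τ₂ ∧
  ∀ v₁ v₂, R v₁ v₂ → ClosedVal τ₁ v₁ ∧ ClosedVal τ₂ v₂

/-- Environments: maps from type variables to relations. -/
abbrev TyEnv : Type := ℕ → Rel

/-- The value logical relation `V⟦τ⟧ρ` (FR-Int, FR-Pair, FR-Fun, FR-Var). -/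
def Vrel (δ₁ δ₂ : ℕ → Ty) (ρ : TyEnv) : Ty → Rel
  | .int => fun v₁ v₂ => ∃ n : ℤ, v₁ = .lit n ∧ v₂ = .lit n
  | .tvar a => fun v₁ v₂ => ρ a v₁ v₂
  | .prod t₁ t₂ => fun v₁ v₂ =>
      ∃ a₁ b₁ a₂ b₂, v₁ = .pair a₁ b₁ ∧ v₂ = .pair a₂ b₂ ∧
        Vrel δ₁ δ₂ ρ t₁ a₁ a₂ ∧ Vrel δ₁ δ₂ ρ t₂ b₁ b₂
  | .arrow t₁ t₂ => fun v₁ v₂ =>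
      ∀ w₁ w₂, Vrel δ₁ δ₂ ρ t₁ w₁ w₂ →
        HasTy ∅ Ctx.empty (.app v₁ w₁) (t₂.subst δ₁) ∧
        HasTy ∅ Ctx.empty (.app v₂ w₂) (t₂.subst δ₂) ∧
        ∃ u₁ u₂, Steps (.app v₁ w₁) u₁ ∧ Steps (.app v₂ w₂) u₂ ∧
          IsValue u₁ ∧ IsValue u₂ ∧ Vrel δ₁ δ₂ ρ t₂ u₁ u₂

/-- The term logical relation `E⟦τ⟧ρ` (FR-Term). -/
def Erel (δ₁ δ₂ : ℕ → Ty) (ρ : TyEnv) (τ : Ty) : Rel := fun e₁ e₂ =>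
  HasTy ∅ Ctx.empty e₁ (τ.subst δ₁) ∧ HasTy ∅ Ctx.empty e₂ (τ.subst δ₂) ∧
  ∃ v₁ v₂, Steps e₁ v₁ ∧ Steps e₂ v₂ ∧ IsValue v₁ ∧ IsValue v₂ ∧ Vrel δ₁ δ₂ ρ τ v₁ v₂

/-- `δ ⊨ Δ`: the type substitution sends the variables of `Δ` to closed types. -/
def TySubstOk (Δ : Set ℕ) (δ : ℕ → Ty) : Prop := ∀ a ∈ Δ, (δ a).closed

/-- `ρ ∈ Rel(δ₁, δ₂)`: compatibility of an environment with type substitutions over `Δ`. -/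
def EnvCompat (Δ : Set ℕ) (δ₁ δ₂ : ℕ → Ty) (ρ : TyEnv) : Prop :=
  ∀ a ∈ Δ, RelOn (δ₁ a) (δ₂ a) (ρ a)

/-- `γ ⊨ Γ`: the term substitution has the same domain as `Γ`
and maps each variable to a closed value of the right type. -/
def SubstOk (Γ : Ctx) (γ : ℕ → Option Tm) : Prop :=
  (∀ x, (γ x).isSome ↔ (Γ x).isSome) ∧
  ∀ x τ v, Γ x = some τ → γ x = some v → ClosedVal τ v

/-- `⟨γ₁, γ₂⟩ ∈ V⟦Γ⟧ρ`. -/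
def SubstRel (δ₁ δ₂ : ℕ → Ty) (ρ : TyEnv) (Γ : Ctx) (γ₁ γ₂ : ℕ → Option Tm) : Prop :=
  SubstOk (Ctx.tsubst δ₁ Γ) γ₁ ∧ SubstOk (Ctx.tsubst δ₂ Γ) γ₂ ∧
  ∀ x τ, Γ x = some τ → ∃ v₁ v₂, γ₁ x = some v₁ ∧ γ₂ x = some v₂ ∧ Vrel δ₁ δ₂ ρ τ v₁ v₂

/-- Logical equivalence `Δ, Γ ⊢ e ∼ e' : τ`. -/
def LogEq (Δ : Set ℕ) (Γ : Ctx) (e e' : Tm) (τ : Ty) : Prop :=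
  HasTy Δ Γ e τ ∧ HasTy Δ Γ e' τ ∧
  ∀ δ₁ δ₂ ρ γ₁ γ₂, TySubstOk Δ δ₁ → TySubstOk Δ δ₂ → EnvCompat Δ δ₁ δ₂ ρ →
    SubstRel δ₁ δ₂ ρ Γ γ₁ γ₂ →
    Erel δ₁ δ₂ ρ τ (Tm.tsubst δ₁ (Tm.msubst γ₁ e)) (Tm.tsubst δ₂ (Tm.msubst γ₂ e'))

/-- The environment assigning the empty relation to every type variable. -/
def botEnv : TyEnv := fun _ _ _ => False

/-- A declassification policy `P = ⟨Var_P, D_P⟩`: a finite set of confidential input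
variables, and a partial map sending some of them to declassification functions `f`
together with the result type `τ_f` of `f`.

Naming convention for the encoding: for an input variable `x ∈ Var_P`, the term variable
for the confidential input is `2*x`, the term variable `x_f` naming its declassifier is
`2*x + 1`, and its abstract type variable (`α_x` resp. `α_f`) is `x` itself. -/
structure Policy where
  vars : Finset ℕ
  dec : ℕ → Option (Tm × Ty)

/-- Well-formedness of a policy: declassifiable variables are confidential inputs, and
each declassifier `f` is a closed term of type `int → τ_f` with `τ_f` closed. -/
def Policy.WF (P : Policy) : Prop :=
  (∀ x, (P.dec x).isSome → x ∈ P.vars) ∧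
  ∀ x f τf, P.dec x = some (f, τf) →
    Ty.closed τf ∧ HasTy ∅ Ctx.empty f (.arrow .int τf)

/-- `δ_P`: the type substitution sending every type variable of the public view to `int`. -/
def deltaP : ℕ → Ty := fun _ => .int

/-- `Δ_P`: the type context of the public view. -/
def Policy.tyCtx (P : Policy) : Set ℕ := ↑P.vars

/-- `ρ_P`: the environment interpreting `α_x` as the full relation on closed integer
values, and `α_f` as `{(v₁,v₂) : ⊢ v₁,v₂ : int ∧ (f v₁, f v₂) ∈ E⟦τ_f⟧}`. -/
def Policy.rho (P : Policy) : TyEnv := fun a v₁ v₂ =>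
  match P.dec a with
  | none => ClosedVal .int v₁ ∧ ClosedVal .int v₂
  | some (f, τf) =>
      ClosedVal .int v₁ ∧ ClosedVal .int v₂ ∧
      Erel deltaP deltaP botEnv τf (.app f v₁) (.app f v₂)

/-- `Γ_P`: the term context of the public view: `x : α_x` (resp. `x : α_f` and
`x_f : α_f → τ_f` when `x` is declassifiable via `f : int → τ_f`). -/
def Policy.pubCtx (P : Policy) : Ctx := fun n =>
  if n % 2 = 0 then
    (if n / 2 ∈ P.vars then some (.tvar (n / 2)) else none)
  else
    (P.dec (n / 2)).map (fun p => Ty.arrow (.tvar (n / 2)) p.2)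

/-- `Γ_{C,P}`: the confidential view: `x : int` and `x_f : int → τ_f`. -/
def Policy.confCtx (P : Policy) : Ctx := fun n =>
  if n % 2 = 0 then
    (if n / 2 ∈ P.vars then some .int else none)
  else
    (P.dec (n / 2)).map (fun p => Ty.arrow .int p.2)

/-- Indistinguishability on values, `Ind_val⟦τ⟧` (Fig. 3: Eq-Int, Eq-Pair, Eq-Fun,
Eq-Var1, Eq-Var2). -/
def Policy.IndVal (P : Policy) : Ty → Rel
  | .int => fun v₁ v₂ => ∃ n : ℤ, v₁ = .lit n ∧ v₂ = .lit n
  | .tvar a => fun v₁ v₂ =>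
      match P.dec a with
      | none => ClosedVal .int v₁ ∧ ClosedVal .int v₂
      | some (f, τf) =>
          ClosedVal .int v₁ ∧ ClosedVal .int v₂ ∧
          Erel deltaP deltaP botEnv τf (.app f v₁) (.app f v₂)
  | .prod t₁ t₂ => fun v₁ v₂ =>
      ∃ a₁ b₁ a₂ b₂, v₁ = .pair a₁ b₁ ∧ v₂ = .pair a₂ b₂ ∧
        Policy.IndVal P t₁ a₁ a₂ ∧ Policy.IndVal P t₂ b₁ b₂
  | .arrow t₁ t₂ => fun v₁ v₂ =>
      ∀ w₁ w₂, Policy.IndVal P t₁ w₁ w₂ →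
        HasTy ∅ Ctx.empty (.app v₁ w₁) (t₂.subst deltaP) ∧
        HasTy ∅ Ctx.empty (.app v₂ w₂) (t₂.subst deltaP) ∧
        ∃ u₁ u₂, Steps (.app v₁ w₁) u₁ ∧ Steps (.app v₂ w₂) u₂ ∧
          IsValue u₁ ∧ IsValue u₂ ∧ Policy.IndVal P t₂ u₁ u₂

/-- Indistinguishability on terms, `Ind_term⟦τ⟧` (Eq-Term). -/
def Policy.IndTerm (P : Policy) (τ : Ty) : Rel := fun e₁ e₂ =>
  HasTy ∅ Ctx.empty e₁ (τ.subst deltaP) ∧ HasTy ∅ Ctx.empty e₂ (τ.subst deltaP) ∧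
  ∃ v₁ v₂, Steps e₁ v₁ ∧ Steps e₂ v₂ ∧ IsValue v₁ ∧ IsValue v₂ ∧ Policy.IndVal P τ v₁ v₂

/-- `⟨γ₁, γ₂⟩ ∈ Ind⟦P⟧`: indistinguishable term substitutions: both respect `δ_P(Γ_P)`,
both map each declassifier variable `x_f` to the policy function `f`, and they map all
other variables of the domain to indistinguishable values at their public-view types. -/
def Policy.IndSubst (P : Policy) (γ₁ γ₂ : ℕ → Option Tm) : Prop :=
  SubstOk (Ctx.tsubst deltaP P.pubCtx) γ₁ ∧ SubstOk (Ctx.tsubst deltaP P.pubCtx) γ₂ ∧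
  (∀ x f τf, P.dec x = some (f, τf) →
    γ₁ (2 * x + 1) = some f ∧ γ₂ (2 * x + 1) = some f) ∧
  (∀ x ∈ P.vars, ∃ v₁ v₂, γ₁ (2 * x) = some v₁ ∧ γ₂ (2 * x) = some v₂ ∧
    Policy.IndVal P (.tvar x) v₁ v₂)

/-- A term has no type variables when all its type annotations are closed. -/
def Tm.noTyVars : Tm → Prop
  | .var _ => True
  | .lit _ => True
  | .pair e₁ e₂ => e₁.noTyVars ∧ e₂.noTyVars
  | .fst e => e.noTyVars
  | .snd e => e.noTyVars
  | .lam _ τ b => τ.closed ∧ b.noTyVars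
  | .app e₁ e₂ => e₁.noTyVars ∧ e₂.noTyVars
  | .prim _ e₁ e₂ => e₁.noTyVars ∧ e₂.noTyVars

/-- Type-based relaxed noninterference, `TRNI(P, τ)` (Def. 4): `e` is typable in the
confidential view, `τ` is well-formed in the public type context, and indistinguishable
substitutions are mapped to indistinguishable results. -/
def Policy.TRNI (P : Policy) (τ : Ty) (e : Tm) : Prop :=
  (∃ τ', HasTy ∅ P.confCtx e τ') ∧ Ty.wf P.tyCtx τ ∧
  ∀ γ₁ γ₂, P.IndSubst γ₁ γ₂ → P.IndTerm τ (e.msubst γ₁) (e.msubst γ₂)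

/-- The parity policy `P_OE`: a single confidential input `x` (encoded as input
variable `0`) that may be declassified via `f = λx:int. x mod 2`. -/
def fOE : Tm := .lam 0 .int (.prim (fun a b => a % b) (.var 0) (.lit 2))

def pOE : Policy where
  vars := {0}
  dec := fun x => if x = 0 then some (fOE, .int) else none

/-- For a closed type, the value relation does not depend on the environment. -/
lemma Vrel_env_irrel (δ₁ δ₂ : ℕ → Ty) :
    ∀ τ : Ty, τ.closed → ∀ (ρ ρ' : TyEnv) v₁ v₂,
      Vrel δ₁ δ₂ ρ τ v₁ v₂ → Vrel δ₁ δ₂ ρ' τ v₁ v₂ := by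
  intro τ
  induction τ with
  | int => intro _ ρ ρ' v₁ v₂ h; exact h
  | tvar a => intro hc; exact absurd hc (by simp [Ty.closed, Ty.wf])
  | prod t₁ t₂ ih₁ ih₂ =>
    rintro ⟨hc₁, hc₂⟩ ρ ρ' v₁ v₂ ⟨a₁, b₁, a₂, b₂, e₁, e₂, h₁, h₂⟩
    exact ⟨a₁, b₁, a₂, b₂, e₁, e₂, ih₁ hc₁ ρ ρ' _ _ h₁, ih₂ hc₂ ρ ρ' _ _ h₂⟩
  | arrow t₁ t₂ ih₁ ih₂ =>
    rintro ⟨hc₁, hc₂⟩ ρ ρ' v₁ v₂ h w₁ w₂ hw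
    obtain ⟨ht₁, ht₂, u₁, u₂, s₁, s₂, iv₁, iv₂, hV⟩ := h w₁ w₂ (ih₁ hc₁ ρ' ρ _ _ hw)
    exact ⟨ht₁, ht₂, u₁, u₂, s₁, s₂, iv₁, iv₂, ih₂ hc₂ ρ ρ' _ _ hV⟩

/-- If term substitutions `γ₁, γ₂` are indistinguishable w.r.t. the
policy `P`, then `⟨γ₁, γ₂⟩` is in the logical relation `V⟦Γ_P⟧ρ_P` on substitutions:
in particular, for every `x ∈ dom(Γ_P)`, `(γ₁(x), γ₂(x)) ∈ V⟦Γ_P(x)⟧ρ_P`. -/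
theorem indistinguishable_substitutions_logically_related
    (P : Policy) (hP : P.WF) (γ₁ γ₂ : ℕ → Option Tm)
    (h : P.IndSubst γ₁ γ₂) :
    SubstRel deltaP deltaP P.rho P.pubCtx γ₁ γ₂ := by
  obtain ⟨h1, h2, hdec, hvars⟩ := h
  refine ⟨h1, h2, ?_⟩
  intro x τ hx
  unfold Policy.pubCtx at hx
  by_cases heven : x % 2 = 0
  · rw [if_pos heven] at hx
    by_cases hmem : x / 2 ∈ P.vars
    · rw [if_pos hmem] at hx
      cases hx
      obtain ⟨v₁, v₂, hg1, hg2, hind⟩ := hvars (x / 2) hmem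
      have hx2 : 2 * (x / 2) = x := by omega
      rw [hx2] at hg1 hg2
      refine ⟨v₁, v₂, hg1, hg2, ?_⟩
      show P.rho (x / 2) v₁ v₂
      simpa [Policy.IndVal, Policy.rho] using hind
    · rw [if_neg hmem] at hx; exact absurd hx (by simp)
  · rw [if_neg heven] at hx
    cases hd : P.dec (x / 2) with
    | none => rw [hd] at hx; simp at hx
    | some p =>
      obtain ⟨f, τf⟩ := p
      rw [hd] at hx
      simp only [Option.map_some] at hx
      cases hx
      obtain ⟨hg1, hg2⟩ := hdec (x / 2) f τf hd
      have hx2 : 2 * (x / 2) + 1 = x := by omega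
      rw [hx2] at hg1 hg2
      refine ⟨f, f, hg1, hg2, ?_⟩
      intro w₁ w₂ hw
      have hw' : P.rho (x / 2) w₁ w₂ := hw
      rw [Policy.rho, hd] at hw'
      obtain ⟨-, -, ht₁, ht₂, u₁, u₂, s₁, s₂, iv₁, iv₂, hV⟩ := hw'
      have hτf : τf.closed := (hP.2 (x / 2) f τf hd).1
      exact ⟨ht₁, ht₂, u₁, u₂, s₁, s₂, iv₁, iv₂,
        Vrel_env_irrel _ _ τf hτf botEnv P.rho _ _ hV⟩

end STLC
end

section
/- Free theorem for type-based relaxed noninterference: if a term e contains no type variables and is well-typed at τ in the public view, i.e. Δ_P, Γ_P ⊢ e : τ, then e satisfies TRNI(P, τ): e is typable in the confidential view, τ is well-formed in Δ_P, and for all indistinguishable term substitutions (γ1, γ2) ∈ Ind⟦P⟧, the pair (γ1(e), γ2(e)) is in the term indistinguishability relation Ind_term⟦τ⟧. -/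
namespace STLC

/-!
With `δ₁ = δ₂ = δ_P` and `ρ = ρ_P`, the logical relation is indistinguishability and an
indistinguishable pair of substitutions is a pair related at `Γ_P`, because `ρ_P(α_f)` is exactly
the relation on which the declassifier `f` gives related results. So the free theorem is the
abstraction theorem for the public view, and typability in the confidential view is the typing
derivation pushed through `δ_P`, which fixes the closed annotations of `e`.

The abstraction theorem holds for arbitrary `δ` and `ρ`: besides the types in `Γ`, the only
types interpreted semantically are the closed annotations of `λ`-binders, and at a closed type
`V⟦τ⟧` is independent of `δ`, `ρ` and relates only closed typed terms that evaluate to related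
values. The latter uses that every closed type relates some pair of values and that reduction is
deterministic.
-/

theorem Ty.wf.mono {Δ Δ' : Set ℕ} {τ : Ty} (hτ : τ.wf Δ) (h : Δ ⊆ Δ') : τ.wf Δ' := by
  induction τ with
  | int => trivial
  | tvar a => exact h hτ
  | prod t₁ t₂ ih₁ ih₂ | arrow t₁ t₂ ih₁ ih₂ => exact ⟨ih₁ hτ.1, ih₂ hτ.2⟩

theorem Ty.subst_of_closed {τ : Ty} (h : τ.closed) (δ : ℕ → Ty) : τ.subst δ = τ := by
  induction τ with
  | int => rfl
  | tvar a => exact absurd h id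
  | prod t₁ t₂ ih₁ ih₂ | arrow t₁ t₂ ih₁ ih₂ => rw [Ty.subst, ih₁ h.1, ih₂ h.2]

namespace HasTy

variable {Δ : Set ℕ} {Γ : Ctx} {e : Tm} {τ : Ty}

theorem weaken {Γ' : Ctx} (ht : HasTy Δ Γ e τ) (h : ∀ x σ, Γ x = some σ → Γ' x = some σ) :
    HasTy Δ Γ' e τ := by
  induction ht generalizing Γ' with
  | var hx => exact .var (h _ _ hx)
  | lit n => exact .lit n
  | pair _ _ ih₁ ih₂ => exact .pair (ih₁ h) (ih₂ h)
  | fst _ ih => exact .fst (ih h)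
  | snd _ ih => exact .snd (ih h)
  | @lam _ x _ _ _ hwf _ ih =>
      refine .lam hwf (ih fun y σ hy => ?_)
      unfold Ctx.update at hy ⊢
      by_cases hyx : y = x
      · simpa [hyx] using hy
      · simpa [hyx] using h _ _ (by simpa [hyx] using hy)
  | app _ _ ih₁ ih₂ => exact .app (ih₁ h) (ih₂ h)
  | prim f _ _ ih₁ ih₂ => exact .prim f (ih₁ h) (ih₂ h)

theorem of_empty (ht : HasTy Δ Ctx.empty e τ) : HasTy Δ Γ e τ :=
  ht.weaken fun _ _ h => nomatch h

theorem mono_tyCtx {Δ' : Set ℕ} (ht : HasTy Δ Γ e τ) (h : Δ ⊆ Δ') : HasTy Δ' Γ e τ := by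
  induction ht with
  | var hx => exact .var hx
  | lit n => exact .lit n
  | pair _ _ ih₁ ih₂ => exact .pair ih₁ ih₂
  | fst _ ih => exact .fst ih
  | snd _ ih => exact .snd ih
  | lam hwf _ ih => exact .lam (hwf.mono h) ih
  | app _ _ ih₁ ih₂ => exact .app ih₁ ih₂
  | prim f _ _ ih₁ ih₂ => exact .prim f ih₁ ih₂

theorem unique {τ' : Ty} (ht : HasTy Δ Γ e τ) (ht' : HasTy Δ Γ e τ') : τ = τ' := by
  induction ht generalizing τ' with
  | var hx => cases ht' with | var hx' => exact Option.some_inj.mp (hx ▸ hx')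
  | lit n => cases ht'; rfl
  | pair _ _ ih₁ ih₂ => cases ht' with | pair h₁ h₂ => rw [ih₁ h₁, ih₂ h₂]
  | fst _ ih => cases ht' with | fst h => cases ih h; rfl
  | snd _ ih => cases ht' with | snd h => cases ih h; rfl
  | lam _ _ ih => cases ht' with | lam _ h => rw [ih h]
  | app _ _ ih₁ _ => cases ht' with | app h₁ _ => cases ih₁ h₁; rfl
  | prim f _ _ _ _ => cases ht'; rfl

theorem ty_wf (ht : HasTy Δ Γ e τ) (hΓ : ∀ x σ, Γ x = some σ → σ.wf Δ) : τ.wf Δ := by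
  induction ht with
  | var hx => exact hΓ _ _ hx
  | lit n => trivial
  | pair _ _ ih₁ ih₂ => exact ⟨ih₁ hΓ, ih₂ hΓ⟩
  | fst _ ih => exact (ih hΓ).1
  | snd _ ih => exact (ih hΓ).2
  | lam hwf _ ih =>
      refine ⟨hwf, ih fun y σ hy => ?_⟩
      unfold Ctx.update at hy
      split at hy
      · cases hy; exact hwf
      · exact hΓ _ _ hy
  | app _ _ ih₁ _ => exact (ih₁ hΓ).2
  | prim f _ _ _ _ => trivial

theorem tsubst (δ : ℕ → Ty) (ht : HasTy Δ Γ e τ) (hno : e.noTyVars) :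
    HasTy ∅ (Γ.tsubst δ) e (τ.subst δ) := by
  induction ht with
  | var hx => exact .var (by simp [Ctx.tsubst, hx])
  | lit n => exact .lit n
  | pair _ _ ih₁ ih₂ => exact .pair (ih₁ hno.1) (ih₂ hno.2)
  | fst _ ih => exact .fst (ih hno)
  | snd _ ih => exact .snd (ih hno)
  | @lam Γ x τ₁ b τ₂ _ _ ih =>
      have hc : τ₁.closed := hno.1
      have hctx : (Γ.update x τ₁).tsubst δ = (Γ.tsubst δ).update x τ₁ := by
        funext y
        simp only [Ctx.tsubst, Ctx.update]
        split <;> simp [Ty.subst_of_closed hc]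
      have hb := ih hno.2
      rw [hctx] at hb
      show HasTy ∅ _ _ (.arrow (τ₁.subst δ) _)
      rw [Ty.subst_of_closed hc]
      exact .lam hc hb
  | app _ _ ih₁ ih₂ => exact .app (ih₁ hno.1) (ih₂ hno.2)
  | prim f _ _ ih₁ ih₂ => exact .prim f (ih₁ hno.1) (ih₂ hno.2)

theorem msubst_eq_self (ht : HasTy Δ Γ e τ) {γ : ℕ → Option Tm}
    (hγ : ∀ x, (Γ x).isSome → γ x = none) : e.msubst γ = e := by
  induction ht generalizing γ with
  | @var _ x _ hx => simp [Tm.msubst, hγ x (by simp [hx])]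
  | lit n => rfl
  | pair _ _ ih₁ ih₂ | app _ _ ih₁ ih₂ | prim _ _ _ ih₁ ih₂ =>
      simp only [Tm.msubst, ih₁ hγ, ih₂ hγ]
  | fst _ ih | snd _ ih => simp only [Tm.msubst, ih hγ]
  | @lam _ x _ _ _ _ _ ih =>
      refine congrArg _ (ih fun y hy => ?_)
      by_cases hyx : y = x
      · simp [hyx]
      · simp only [Ctx.update, if_neg hyx] at hy
        simp [hyx, hγ y hy]

theorem msubst_of_empty (ht : HasTy Δ Ctx.empty e τ) (γ : ℕ → Option Tm) : e.msubst γ = e :=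
  ht.msubst_eq_self fun _ h => nomatch h

theorem msubst (ht : HasTy Δ Γ e τ) {γ : ℕ → Option Tm}
    (hγ : ∀ x σ v, Γ x = some σ → γ x = some v → ClosedVal σ v) :
    HasTy Δ (fun y => if (γ y).isSome then none else Γ y) (e.msubst γ) τ := by
  induction ht generalizing γ with
  | @var _ x σ hx =>
      cases hx' : γ x with
      | none => simpa [Tm.msubst, hx'] using HasTy.var (Δ := Δ) (by simp [hx', hx])
      | some v => simpa [Tm.msubst, hx'] using ((hγ x σ v hx hx').2.mono_tyCtx (by simp)).of_empty
  | lit n => exact .lit n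
  | pair _ _ ih₁ ih₂ => exact .pair (ih₁ hγ) (ih₂ hγ)
  | fst _ ih => exact .fst (ih hγ)
  | snd _ ih => exact .snd (ih hγ)
  | @lam Γ x τ₁ _ _ hwf _ ih =>
      have hγ' : ∀ y σ v, Γ.update x τ₁ y = some σ →
          (if y = x then none else γ y) = some v → ClosedVal σ v := by
        intro y σ v hy hv
        by_cases hyx : y = x
        · simp [hyx] at hv
        · simp only [Ctx.update, if_neg hyx] at hy hv
          exact hγ y σ v hy hv
      have hctx : (fun y => if (if y = x then none else γ y).isSome then none
            else Γ.update x τ₁ y) =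
          Ctx.update (fun y => if (γ y).isSome then none else Γ y) x τ₁ := by
        funext y
        by_cases hyx : y = x <;> simp [Ctx.update, hyx]
      exact .lam hwf (hctx ▸ ih hγ')
  | app _ _ ih₁ ih₂ => exact .app (ih₁ hγ) (ih₂ hγ)
  | prim f _ _ ih₁ ih₂ => exact .prim f (ih₁ hγ) (ih₂ hγ)

theorem msubst_of_substOk (ht : HasTy Δ Γ e τ) {γ : ℕ → Option Tm} (hγ : SubstOk Γ γ) :
    HasTy Δ Ctx.empty (e.msubst γ) τ := by
  have hctx : (fun y => if (γ y).isSome then none else Γ y) = Ctx.empty := by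
    funext y
    by_cases hy : (γ y).isSome
    · simp [hy, Ctx.empty]
    · simpa [hy, Ctx.empty] using mt (hγ.1 y).mpr hy
  exact hctx ▸ ht.msubst hγ.2

theorem subst1 {x : ℕ} {σ : Ty} {b v : Tm} (hb : HasTy Δ (Ctx.empty.update x σ) b τ)
    (hv : ClosedVal σ v) :
    HasTy Δ Ctx.empty (Tm.subst1 x v b) τ := by
  refine hb.msubst_of_substOk ⟨fun y => ?_, fun y σ' w hy hw => ?_⟩
  · by_cases hyx : y = x <;> simp [Ctx.update, Ctx.empty, hyx]
  · by_cases hyx : y = x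
    · simp only [Ctx.update, hyx, if_true, Option.some_inj] at hy hw
      exact hy ▸ hw ▸ hv
    · simp [hyx] at hw

end HasTy

def RangeClosed (γ : ℕ → Option Tm) : Prop := ∀ x u, γ x = some u → ∀ σ, u.msubst σ = u

theorem RangeClosed.erase {γ : ℕ → Option Tm} (hγ : RangeClosed γ) (z : ℕ) :
    RangeClosed fun x => if x = z then none else γ x := by
  intro x u hx
  by_cases hxz : x = z
  · simp [hxz] at hx
  · simp only [if_neg hxz] at hx; exact hγ x u hx

namespace Tm

theorem msubst_msubst (b : Tm) {γ : ℕ → Option Tm} (hγ : RangeClosed γ) (σ : ℕ → Option Tm) :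
    (b.msubst γ).msubst σ = b.msubst fun x => (γ x).or (σ x) := by
  induction b generalizing γ σ with
  | var x => cases hx : γ x <;> simp [msubst, hx, hγ x]
  | lit n => rfl
  | pair _ _ ih₁ ih₂ | app _ _ ih₁ ih₂ | prim _ _ _ ih₁ ih₂ =>
      simp only [msubst, ih₁ hγ, ih₂ hγ]
  | fst _ ih | snd _ ih => simp only [msubst, ih hγ]
  | lam z τ b ih =>
      simp only [msubst, ih (hγ.erase z)]
      congr 2
      funext x
      by_cases hxz : x = z <;> simp [hxz]

theorem subst1_msubst_erase (b : Tm) (x : ℕ) (v : Tm) {γ : ℕ → Option Tm} (hγ : RangeClosed γ) :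
    subst1 x v (b.msubst fun y => if y = x then none else γ y) =
      b.msubst fun y => if y = x then some v else γ y := by
  rw [subst1, msubst_msubst b (hγ.erase x)]
  congr 1
  funext y
  by_cases hyx : y = x <;> simp [hyx]

end Tm

theorem IsValue.not_step {v e : Tm} (hv : IsValue v) : ¬ Step v e := by
  intro h
  induction hv generalizing e with
  | lit n => cases h
  | pair _ _ ih₁ ih₂ =>
      cases h with
      | pairL hs => exact ih₁ hs
      | pairR _ hs => exact ih₂ hs
  | lam x τ b => cases h

theorem Step.deterministic {e a b : Tm} (ha : Step e a) (hb : Step e b) : a = b := by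
  induction ha generalizing b <;> cases hb <;>
    grind [IsValue.not_step, IsValue.lit, IsValue.lam, IsValue.pair]

theorem Step.preservation {e e' : Tm} {τ : Ty} (hs : Step e e') (ht : HasTy ∅ Ctx.empty e τ) :
    HasTy ∅ Ctx.empty e' τ := by
  induction hs generalizing τ with
  | beta hv => cases ht with | app hf ha => cases hf with | lam _ hb => exact hb.subst1 ⟨hv, ha⟩
  | fstPair => cases ht with | fst h => cases h with | pair h₁ _ => exact h₁
  | sndPair => cases ht with | snd h => cases h with | pair _ h₂ => exact h₂
  | primOp => cases ht; exact .lit _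
  | pairL _ ih => cases ht with | pair h₁ h₂ => exact .pair (ih h₁) h₂
  | pairR _ _ ih => cases ht with | pair h₁ h₂ => exact .pair h₁ (ih h₂)
  | fstC _ ih => cases ht with | fst h => exact .fst (ih h)
  | sndC _ ih => cases ht with | snd h => exact .snd (ih h)
  | appL _ ih => cases ht with | app h₁ h₂ => exact .app (ih h₁) h₂
  | appR _ _ ih => cases ht with | app h₁ h₂ => exact .app h₁ (ih h₂)
  | primL _ ih => cases ht with | prim _ h₁ h₂ => exact .prim _ (ih h₁) h₂
  | primR _ _ ih => cases ht with | prim _ h₁ h₂ => exact .prim _ h₁ (ih h₂)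

namespace Steps

theorem preservation {e e' : Tm} {τ : Ty} (hs : Steps e e') (ht : HasTy ∅ Ctx.empty e τ) :
    HasTy ∅ Ctx.empty e' τ :=
  Relation.ReflTransGen.rec ht (fun _ hs ih => hs.preservation ih) hs

theorem steps_of_reaches_value {a b u : Tm} (hab : Steps a b) (hau : Steps a u)
    (hu : IsValue u) : Steps b u := by
  induction hab using Relation.ReflTransGen.head_induction_on with
  | refl => exact hau
  | head hac _ ih =>
      rcases hau.cases_head with rfl | ⟨c', hac', hc'u⟩
      · exact absurd hac hu.not_step
      · exact ih (hac.deterministic hac' ▸ hc'u)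

theorem pairL {e₁ e₁' e₂ : Tm} (h : Steps e₁ e₁') : Steps (.pair e₁ e₂) (.pair e₁' e₂) :=
  h.lift (fun e => Tm.pair e e₂) fun _ _ => Step.pairL

theorem pairR {v₁ e₂ e₂' : Tm} (hv : IsValue v₁) (h : Steps e₂ e₂') :
    Steps (.pair v₁ e₂) (.pair v₁ e₂') :=
  h.lift (fun e => Tm.pair v₁ e) fun _ _ => Step.pairR hv

theorem fst {e e' : Tm} (h : Steps e e') : Steps (.fst e) (.fst e') :=
  h.lift Tm.fst fun _ _ => Step.fstC

theorem snd {e e' : Tm} (h : Steps e e') : Steps (.snd e) (.snd e') :=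
  h.lift Tm.snd fun _ _ => Step.sndC

theorem appL {e₁ e₁' e₂ : Tm} (h : Steps e₁ e₁') : Steps (.app e₁ e₂) (.app e₁' e₂) :=
  h.lift (fun e => Tm.app e e₂) fun _ _ => Step.appL

theorem appR {v₁ e₂ e₂' : Tm} (hv : IsValue v₁) (h : Steps e₂ e₂') :
    Steps (.app v₁ e₂) (.app v₁ e₂') :=
  h.lift (fun e => Tm.app v₁ e) fun _ _ => Step.appR hv

theorem primL {f : ℤ → ℤ → ℤ} {e₁ e₁' e₂ : Tm} (h : Steps e₁ e₁') :
    Steps (.prim f e₁ e₂) (.prim f e₁' e₂) :=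
  h.lift (fun e => Tm.prim f e e₂) fun _ _ => Step.primL

theorem primR {f : ℤ → ℤ → ℤ} {v₁ e₂ e₂' : Tm} (hv : IsValue v₁) (h : Steps e₂ e₂') :
    Steps (.prim f v₁ e₂) (.prim f v₁ e₂') :=
  h.lift (fun e => Tm.prim f v₁ e) fun _ _ => Step.primR hv

theorem exists_value_of_app {e₁ e₂ u : Tm} (h : Steps (.app e₁ e₂) u) (hu : IsValue u) :
    ∃ v, Steps e₁ v ∧ IsValue v := by
  generalize ha : Tm.app e₁ e₂ = a at h
  induction h using Relation.ReflTransGen.head_induction_on generalizing e₁ with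
  | refl => subst ha; cases hu
  | head hac _ ih =>
      subst ha
      cases hac with
      | beta => exact ⟨_, .refl, .lam _ _ _⟩
      | appL hs =>
          obtain ⟨v, hv, hval⟩ := ih rfl
          exact ⟨v, .head hs hv, hval⟩
      | appR hv₁ _ => exact ⟨e₁, .refl, hv₁⟩

end Steps

theorem Vrel.eq_of_closed {τ : Ty} (hc : τ.closed) (δ₁ δ₂ δ₁' δ₂' : ℕ → Ty) (ρ ρ' : TyEnv) :
    Vrel δ₁ δ₂ ρ τ = Vrel δ₁' δ₂' ρ' τ := by
  induction τ with
  | int => rfl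
  | tvar a => exact absurd hc id
  | prod t₁ t₂ ih₁ ih₂ => simp only [Vrel, ih₁ hc.1, ih₂ hc.2]
  | arrow t₁ t₂ ih₁ ih₂ => simp only [Vrel, ih₁ hc.1, ih₂ hc.2, Ty.subst_of_closed hc.2]

/-- At function types `V⟦τ⟧` may relate non-values and is not visibly typed; at closed types
this invariant restores both, which is what the `λ` case of the abstraction theorem needs. -/
structure VrelAdequate (δ₁ δ₂ : ℕ → Ty) (ρ : TyEnv) (τ : Ty) : Prop where
  hasTy {e₁ e₂ : Tm} : Vrel δ₁ δ₂ ρ τ e₁ e₂ → HasTy ∅ Ctx.empty e₁ τ ∧ HasTy ∅ Ctx.empty e₂ τ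
  inhabited : ∃ v₁ v₂, IsValue v₁ ∧ IsValue v₂ ∧ Vrel δ₁ δ₂ ρ τ v₁ v₂
  normalizes {e₁ e₂ : Tm} : Vrel δ₁ δ₂ ρ τ e₁ e₂ →
    ∃ v₁ v₂, Steps e₁ v₁ ∧ Steps e₂ v₂ ∧ IsValue v₁ ∧ IsValue v₂ ∧ Vrel δ₁ δ₂ ρ τ v₁ v₂

namespace VrelAdequate

variable {δ₁ δ₂ : ℕ → Ty} {ρ : TyEnv}

theorem int : VrelAdequate δ₁ δ₂ ρ .int where
  hasTy := by rintro _ _ ⟨n, rfl, rfl⟩; exact ⟨.lit n, .lit n⟩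
  inhabited := ⟨.lit 0, .lit 0, .lit 0, .lit 0, 0, rfl, rfl⟩
  normalizes := by
    rintro _ _ ⟨n, rfl, rfl⟩
    exact ⟨.lit n, .lit n, .refl, .refl, .lit n, .lit n, n, rfl, rfl⟩

theorem prod {t₁ t₂ : Ty} (h₁ : VrelAdequate δ₁ δ₂ ρ t₁) (h₂ : VrelAdequate δ₁ δ₂ ρ t₂) :
    VrelAdequate δ₁ δ₂ ρ (.prod t₁ t₂) where
  hasTy := by
    rintro _ _ ⟨a₁, b₁, a₂, b₂, rfl, rfl, ha, hb⟩
    exact ⟨.pair (h₁.hasTy ha).1 (h₂.hasTy hb).1, .pair (h₁.hasTy ha).2 (h₂.hasTy hb).2⟩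
  inhabited := by
    obtain ⟨a₁, a₂, ha₁, ha₂, ha⟩ := h₁.inhabited
    obtain ⟨b₁, b₂, hb₁, hb₂, hb⟩ := h₂.inhabited
    exact ⟨_, _, .pair ha₁ hb₁, .pair ha₂ hb₂, a₁, b₁, a₂, b₂, rfl, rfl, ha, hb⟩
  normalizes := by
    rintro _ _ ⟨a₁, b₁, a₂, b₂, rfl, rfl, ha, hb⟩
    obtain ⟨a₁', a₂', sa₁, sa₂, va₁, va₂, ha'⟩ := h₁.normalizes ha
    obtain ⟨b₁', b₂', sb₁, sb₂, vb₁, vb₂, hb'⟩ := h₂.normalizes hb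
    exact ⟨_, _, sa₁.pairL.trans (sb₁.pairR va₁), sa₂.pairL.trans (sb₂.pairR va₂),
      .pair va₁ vb₁, .pair va₂ vb₂, a₁', b₁', a₂', b₂', rfl, rfl, ha', hb'⟩

theorem arrow {t₁ t₂ : Ty} (hc₁ : t₁.closed) (hc₂ : t₂.closed) (h₁ : VrelAdequate δ₁ δ₂ ρ t₁)
    (h₂ : VrelAdequate δ₁ δ₂ ρ t₂) : VrelAdequate δ₁ δ₂ ρ (.arrow t₁ t₂) := by
  obtain ⟨w₁, w₂, -, -, hw⟩ := h₁.inhabited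
  have hs₁ := Ty.subst_of_closed hc₂ δ₁
  have hs₂ := Ty.subst_of_closed hc₂ δ₂
  refine ⟨fun h => ?_, ?_, fun h => ?_⟩
  · -- applying to any related arguments pins down the domain, by uniqueness of types
    obtain ⟨ht₁, ht₂, -⟩ := h w₁ w₂ hw
    rw [hs₁] at ht₁; rw [hs₂] at ht₂
    cases ht₁ with | app hf₁ ha₁ => cases ht₂ with | app hf₂ ha₂ =>
    cases ha₁.unique (h₁.hasTy hw).1; cases ha₂.unique (h₁.hasTy hw).2
    exact ⟨hf₁, hf₂⟩
  · -- constant functions with related values of `t₂` as results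
    obtain ⟨u₁, u₂, hu₁, hu₂, hu⟩ := h₂.inhabited
    obtain ⟨tu₁, tu₂⟩ := h₂.hasTy hu
    refine ⟨.lam 0 t₁ u₁, .lam 0 t₁ u₂, .lam _ _ _, .lam _ _ _, fun w₁ w₂ hw => ?_⟩
    obtain ⟨w₁', w₂', sw₁, sw₂, vw₁, vw₂, -⟩ := h₁.normalizes hw
    have hβ₁ : Step (.app (.lam 0 t₁ u₁) w₁') u₁ := by
      simpa only [Tm.subst1, tu₁.msubst_of_empty] using Step.beta (x := 0) (τ := t₁) (b := u₁) vw₁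
    have hβ₂ : Step (.app (.lam 0 t₁ u₂) w₂') u₂ := by
      simpa only [Tm.subst1, tu₂.msubst_of_empty] using Step.beta (x := 0) (τ := t₁) (b := u₂) vw₂
    refine ⟨by rw [hs₁]; exact .app (.lam hc₁ tu₁.of_empty) (h₁.hasTy hw).1,
      by rw [hs₂]; exact .app (.lam hc₁ tu₂.of_empty) (h₁.hasTy hw).2, u₁, u₂,
      .tail (sw₁.appR (.lam _ _ _)) hβ₁, .tail (sw₂.appR (.lam _ _ _)) hβ₂, hu₁, hu₂, hu⟩
  · -- a function reaches a value once one of its applications does; by determinism its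
    -- applications keep their results
    obtain ⟨-, -, u₁, u₂, su₁, su₂, vu₁, vu₂, -⟩ := h w₁ w₂ hw
    obtain ⟨v₁, sv₁, vv₁⟩ := su₁.exists_value_of_app vu₁
    obtain ⟨v₂, sv₂, vv₂⟩ := su₂.exists_value_of_app vu₂
    refine ⟨v₁, v₂, sv₁, sv₂, vv₁, vv₂, fun w₁' w₂' hw' => ?_⟩
    obtain ⟨ht₁, ht₂, u₁', u₂', su₁', su₂', vu₁', vu₂', hu'⟩ := h w₁' w₂' hw'
    exact ⟨sv₁.appL.preservation ht₁, sv₂.appL.preservation ht₂, u₁', u₂',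
      sv₁.appL.steps_of_reaches_value su₁' vu₁', sv₂.appL.steps_of_reaches_value su₂' vu₂',
      vu₁', vu₂', hu'⟩

theorem of_closed {τ : Ty} (hc : τ.closed) : VrelAdequate δ₁ δ₂ ρ τ := by
  induction τ with
  | int => exact int
  | tvar a => exact absurd hc id
  | prod t₁ t₂ ih₁ ih₂ => exact (ih₁ hc.1).prod (ih₂ hc.2)
  | arrow t₁ t₂ ih₁ ih₂ => exact arrow hc.1 hc.2 (ih₁ hc.1) (ih₂ hc.2)

end VrelAdequate

theorem SubstOk.rangeClosed {Γ : Ctx} {γ : ℕ → Option Tm} (h : SubstOk Γ γ) : RangeClosed γ := by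
  intro x u hx
  obtain ⟨σ, hσ⟩ := Option.isSome_iff_exists.mp ((h.1 x).mp (by simp [hx]))
  exact (h.2 x σ u hσ hx).2.msubst_of_empty

theorem SubstOk.update {Γ : Ctx} {γ : ℕ → Option Tm} (h : SubstOk Γ γ) (x : ℕ) {σ : Ty}
    {w : Tm} (hw : ClosedVal σ w) :
    SubstOk (Γ.update x σ) fun y => if y = x then some w else γ y := by
  refine ⟨fun y => ?_, fun y σ' v hy hv => ?_⟩
  · by_cases hyx : y = x <;> simp [Ctx.update, hyx, h.1 y]
  · by_cases hyx : y = x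
    · simp only [Ctx.update, hyx, if_true, Option.some_inj] at hy hv
      exact hy ▸ hv ▸ hw
    · simp only [Ctx.update, if_neg hyx] at hy hv
      exact h.2 y σ' v hy hv

theorem SubstRel.update {δ₁ δ₂ : ℕ → Ty} {ρ : TyEnv} {Γ : Ctx} {γ₁ γ₂ : ℕ → Option Tm}
    (h : SubstRel δ₁ δ₂ ρ Γ γ₁ γ₂) (x : ℕ) {σ : Ty} {w₁ w₂ : Tm}
    (hw₁ : ClosedVal (σ.subst δ₁) w₁) (hw₂ : ClosedVal (σ.subst δ₂) w₂)
    (hw : Vrel δ₁ δ₂ ρ σ w₁ w₂) :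
    SubstRel δ₁ δ₂ ρ (Γ.update x σ) (fun y => if y = x then some w₁ else γ₁ y)
      (fun y => if y = x then some w₂ else γ₂ y) := by
  have hctx (δ : ℕ → Ty) : (Γ.update x σ).tsubst δ = (Γ.tsubst δ).update x (σ.subst δ) := by
    funext y; simp only [Ctx.tsubst, Ctx.update]; split <;> rfl
  refine ⟨hctx δ₁ ▸ h.1.update x hw₁, hctx δ₂ ▸ h.2.1.update x hw₂, fun y σ' hy => ?_⟩
  by_cases hyx : y = x
  · simp only [Ctx.update, hyx, if_true, Option.some_inj] at hy
    exact ⟨w₁, w₂, by simp [hyx], by simp [hyx], hy ▸ hw⟩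
  · simp only [Ctx.update, if_neg hyx] at hy
    simpa [hyx] using h.2.2 y σ' hy

namespace Erel

variable {δ₁ δ₂ : ℕ → Ty} {ρ : TyEnv}

theorem pair {τ₁ τ₂ : Ty} {a₁ a₂ b₁ b₂ : Tm} (ha : Erel δ₁ δ₂ ρ τ₁ a₁ a₂)
    (hb : Erel δ₁ δ₂ ρ τ₂ b₁ b₂) : Erel δ₁ δ₂ ρ (.prod τ₁ τ₂) (.pair a₁ b₁) (.pair a₂ b₂) := by
  obtain ⟨ta₁, ta₂, a₁', a₂', sa₁, sa₂, va₁, va₂, ha'⟩ := ha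
  obtain ⟨tb₁, tb₂, b₁', b₂', sb₁, sb₂, vb₁, vb₂, hb'⟩ := hb
  exact ⟨.pair ta₁ tb₁, .pair ta₂ tb₂, _, _, sa₁.pairL.trans (sb₁.pairR va₁),
    sa₂.pairL.trans (sb₂.pairR va₂), .pair va₁ vb₁, .pair va₂ vb₂, _, _, _, _, rfl, rfl, ha', hb'⟩

theorem fst {τ₁ τ₂ : Ty} {e₁ e₂ : Tm} (h : Erel δ₁ δ₂ ρ (.prod τ₁ τ₂) e₁ e₂) :
    Erel δ₁ δ₂ ρ τ₁ (.fst e₁) (.fst e₂) := by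
  obtain ⟨t₁, t₂, _, _, s₁, s₂, v₁, v₂, a₁, b₁, a₂, b₂, rfl, rfl, ha, -⟩ := h
  cases v₁ with | pair va₁ vb₁ => cases v₂ with | pair va₂ vb₂ =>
  exact ⟨.fst t₁, .fst t₂, a₁, a₂, .tail s₁.fst (.fstPair va₁ vb₁),
    .tail s₂.fst (.fstPair va₂ vb₂), va₁, va₂, ha⟩

theorem snd {τ₁ τ₂ : Ty} {e₁ e₂ : Tm} (h : Erel δ₁ δ₂ ρ (.prod τ₁ τ₂) e₁ e₂) :
    Erel δ₁ δ₂ ρ τ₂ (.snd e₁) (.snd e₂) := by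
  obtain ⟨t₁, t₂, _, _, s₁, s₂, v₁, v₂, a₁, b₁, a₂, b₂, rfl, rfl, -, hb⟩ := h
  cases v₁ with | pair va₁ vb₁ => cases v₂ with | pair va₂ vb₂ =>
  exact ⟨.snd t₁, .snd t₂, b₁, b₂, .tail s₁.snd (.sndPair va₁ vb₁),
    .tail s₂.snd (.sndPair va₂ vb₂), vb₁, vb₂, hb⟩

theorem app {τ₁ τ₂ : Ty} {f₁ f₂ a₁ a₂ : Tm} (hf : Erel δ₁ δ₂ ρ (.arrow τ₁ τ₂) f₁ f₂)
    (ha : Erel δ₁ δ₂ ρ τ₁ a₁ a₂) : Erel δ₁ δ₂ ρ τ₂ (.app f₁ a₁) (.app f₂ a₂) := by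
  obtain ⟨tf₁, tf₂, g₁, g₂, sf₁, sf₂, vg₁, vg₂, hg⟩ := hf
  obtain ⟨ta₁, ta₂, w₁, w₂, sa₁, sa₂, -, -, hw⟩ := ha
  obtain ⟨-, -, u₁, u₂, su₁, su₂, vu₁, vu₂, hu⟩ := hg w₁ w₂ hw
  exact ⟨.app tf₁ ta₁, .app tf₂ ta₂, u₁, u₂, sf₁.appL.trans ((sa₁.appR vg₁).trans su₁),
    sf₂.appL.trans ((sa₂.appR vg₂).trans su₂), vu₁, vu₂, hu⟩

theorem prim (f : ℤ → ℤ → ℤ) {a₁ a₂ b₁ b₂ : Tm} (ha : Erel δ₁ δ₂ ρ .int a₁ a₂)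
    (hb : Erel δ₁ δ₂ ρ .int b₁ b₂) : Erel δ₁ δ₂ ρ .int (.prim f a₁ b₁) (.prim f a₂ b₂) := by
  obtain ⟨ta₁, ta₂, _, _, sa₁, sa₂, -, -, m, rfl, rfl⟩ := ha
  obtain ⟨tb₁, tb₂, _, _, sb₁, sb₂, -, -, n, rfl, rfl⟩ := hb
  exact ⟨.prim f ta₁ tb₁, .prim f ta₂ tb₂, _, _,
    .tail (sa₁.primL.trans (sb₁.primR (.lit m))) (.primOp f m n),
    .tail (sa₂.primL.trans (sb₂.primR (.lit m))) (.primOp f m n), .lit _, .lit _, _, rfl, rfl⟩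

end Erel

theorem Vrel.lam {δ₁ δ₂ : ℕ → Ty} {ρ : TyEnv} {x : ℕ} {τ₁ τ₂ : Ty} {b₁ b₂ : Tm}
    (hc : τ₁.closed) (hb : ∀ w₁ w₂, ClosedVal τ₁ w₁ → ClosedVal τ₁ w₂ → Vrel δ₁ δ₂ ρ τ₁ w₁ w₂ →
      Erel δ₁ δ₂ ρ τ₂ (Tm.subst1 x w₁ b₁) (Tm.subst1 x w₂ b₂))
    (ht₁ : HasTy ∅ Ctx.empty (.lam x τ₁ b₁) (.arrow τ₁ (τ₂.subst δ₁)))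
    (ht₂ : HasTy ∅ Ctx.empty (.lam x τ₁ b₂) (.arrow τ₁ (τ₂.subst δ₂))) :
    Vrel δ₁ δ₂ ρ (.arrow τ₁ τ₂) (.lam x τ₁ b₁) (.lam x τ₁ b₂) := by
  have hτ₁ : VrelAdequate δ₁ δ₂ ρ τ₁ := .of_closed hc
  intro w₁ w₂ hw
  obtain ⟨w₁', w₂', sw₁, sw₂, vw₁, vw₂, hw'⟩ := hτ₁.normalizes hw
  obtain ⟨-, -, u₁, u₂, su₁, su₂, vu₁, vu₂, hu⟩ :=
    hb w₁' w₂' ⟨vw₁, (hτ₁.hasTy hw').1⟩ ⟨vw₂, (hτ₁.hasTy hw').2⟩ hw'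
  exact ⟨.app ht₁ (hτ₁.hasTy hw).1, .app ht₂ (hτ₁.hasTy hw).2, u₁, u₂,
    (sw₁.appR (.lam _ _ _)).trans (.head (.beta vw₁) su₁),
    (sw₂.appR (.lam _ _ _)).trans (.head (.beta vw₂) su₂), vu₁, vu₂, hu⟩

theorem HasTy.erel_msubst {Δ : Set ℕ} {Γ : Ctx} {e : Tm} {τ : Ty} (ht : HasTy Δ Γ e τ)
    (hno : e.noTyVars) {δ₁ δ₂ : ℕ → Ty} {ρ : TyEnv} {γ₁ γ₂ : ℕ → Option Tm}
    (hγ : SubstRel δ₁ δ₂ ρ Γ γ₁ γ₂) : Erel δ₁ δ₂ ρ τ (e.msubst γ₁) (e.msubst γ₂) := by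
  induction ht generalizing γ₁ γ₂ with
  | @var _ x σ hx =>
      obtain ⟨v₁, v₂, h₁, h₂, hv⟩ := hγ.2.2 x σ hx
      obtain ⟨vv₁, tv₁⟩ := hγ.1.2 x (σ.subst δ₁) v₁ (by simp [Ctx.tsubst, hx]) h₁
      obtain ⟨vv₂, tv₂⟩ := hγ.2.1.2 x (σ.subst δ₂) v₂ (by simp [Ctx.tsubst, hx]) h₂
      simp only [Tm.msubst, h₁, h₂, Option.getD_some]
      exact ⟨tv₁, tv₂, v₁, v₂, .refl, .refl, vv₁, vv₂, hv⟩
  | lit n => exact ⟨.lit n, .lit n, _, _, .refl, .refl, .lit n, .lit n, n, rfl, rfl⟩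
  | pair _ _ ih₁ ih₂ => exact (ih₁ hno.1 hγ).pair (ih₂ hno.2 hγ)
  | fst _ ih => exact (ih hno hγ).fst
  | snd _ ih => exact (ih hno hγ).snd
  | @lam Γ x τ₁ b τ₂ hwf hb ih =>
      have hc : τ₁.closed := hno.1
      have ht₁ := ((HasTy.lam hwf hb).tsubst δ₁ hno).msubst_of_substOk hγ.1
      have ht₂ := ((HasTy.lam hwf hb).tsubst δ₂ hno).msubst_of_substOk hγ.2.1
      have hs (δ : ℕ → Ty) : (Ty.arrow τ₁ τ₂).subst δ = .arrow τ₁ (τ₂.subst δ) := by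
        rw [Ty.subst, Ty.subst_of_closed hc]
      refine ⟨ht₁, ht₂, _, _, .refl, .refl, .lam _ _ _, .lam _ _ _,
        Vrel.lam hc (fun w₁ w₂ hw₁ hw₂ hw => ?_) (hs δ₁ ▸ ht₁) (hs δ₂ ▸ ht₂)⟩
      rw [Tm.subst1_msubst_erase b x w₁ hγ.1.rangeClosed,
        Tm.subst1_msubst_erase b x w₂ hγ.2.1.rangeClosed]
      rw [← Ty.subst_of_closed hc δ₁] at hw₁
      rw [← Ty.subst_of_closed hc δ₂] at hw₂
      exact ih hno.2 (hγ.update x hw₁ hw₂ hw)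
  | app _ _ ih₁ ih₂ => exact (ih₁ hno.1 hγ).app (ih₂ hno.2 hγ)
  | prim f _ _ ih₁ ih₂ => exact .prim f (ih₁ hno.1 hγ) (ih₂ hno.2 hγ)

namespace Policy

theorem indVal_eq_vrel (P : Policy) : P.IndVal = Vrel deltaP deltaP P.rho := by
  funext τ
  induction τ with
  | int | tvar _ => rfl
  | prod t₁ t₂ ih₁ ih₂ | arrow t₁ t₂ ih₁ ih₂ => simp only [IndVal, Vrel, ih₁, ih₂]

theorem pubCtx_eq_some {P : Policy} {n : ℕ} {σ : Ty} (h : P.pubCtx n = some σ) :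
    (∃ x ∈ P.vars, n = 2 * x ∧ σ = .tvar x) ∨
      ∃ x f τf, P.dec x = some (f, τf) ∧ n = 2 * x + 1 ∧ σ = .arrow (.tvar x) τf := by
  unfold pubCtx at h
  split_ifs at h with hn hx
  · exact .inl ⟨n / 2, hx, by omega, (Option.some_inj.mp h).symm⟩
  · obtain ⟨⟨f, τf⟩, hd, rfl⟩ := Option.map_eq_some_iff.mp h
    exact .inr ⟨n / 2, f, τf, hd, by omega, rfl⟩

namespace WF

variable {P : Policy}

theorem tsubst_pubCtx (hP : P.WF) : P.pubCtx.tsubst deltaP = P.confCtx := by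
  funext n
  simp only [Ctx.tsubst, pubCtx, confCtx]
  split_ifs
  · rfl
  · rfl
  · cases hd : P.dec (n / 2) with
    | none => rfl
    | some p => simp [Ty.subst, deltaP, Ty.subst_of_closed (hP.2 _ _ _ hd).1]

theorem pubCtx_wf (hP : P.WF) {n : ℕ} {σ : Ty} (h : P.pubCtx n = some σ) : σ.wf P.tyCtx := by
  rcases pubCtx_eq_some h with ⟨x, hx, -, rfl⟩ | ⟨x, f, τf, hd, -, rfl⟩
  · exact hx
  · exact ⟨hP.1 x (by simp [hd]), (hP.2 x f τf hd).1.mono (Set.empty_subset _)⟩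

theorem substRel_of_indSubst (hP : P.WF) {γ₁ γ₂ : ℕ → Option Tm} (h : P.IndSubst γ₁ γ₂) :
    SubstRel deltaP deltaP P.rho P.pubCtx γ₁ γ₂ := by
  obtain ⟨h₁, h₂, hdec, hvars⟩ := h
  refine ⟨h₁, h₂, fun n σ hn => ?_⟩
  rcases pubCtx_eq_some hn with ⟨x, hx, rfl, rfl⟩ | ⟨x, f, τf, hd, rfl, rfl⟩
  · exact hvars x hx
  · refine ⟨f, f, (hdec x f τf hd).1, (hdec x f τf hd).2, fun w₁ w₂ hw => ?_⟩
    simp only [Vrel, rho, hd] at hw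
    obtain ⟨-, -, hw'⟩ := hw
    rwa [Erel, Vrel.eq_of_closed (hP.2 x f τf hd).1 deltaP deltaP deltaP deltaP botEnv P.rho]
      at hw'

end WF

end Policy

/-- Free theorem for type-based relaxed noninterference: if a term `e`
contains no type variables and `Δ_P, Γ_P ⊢ e : τ` in the public view, then `e`
satisfies `TRNI(P, τ)`. -/
theorem typing_in_public_view_implies_TRNI
    (P : Policy) (hP : P.WF) (e : Tm) (τ : Ty)
    (hno : e.noTyVars)
    (ht : HasTy P.tyCtx P.pubCtx e τ) :
    P.TRNI τ e := by
  refine ⟨⟨τ.subst deltaP, ?_⟩, ht.ty_wf fun _ _ => hP.pubCtx_wf, fun γ₁ γ₂ hγ => ?_⟩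
  · rw [← hP.tsubst_pubCtx]
    exact ht.tsubst deltaP hno
  · have hE := ht.erel_msubst hno (hP.substRel_of_indSubst hγ)
    rwa [Erel, ← P.indVal_eq_vrel] at hE

end STLC
end

section
/- Monadic-lifting lemma for closures: let Q ∈ Rel(ϱ1, ϱ2) and R ∈ Rel(τ1, τ2) be relations on closed values, and let e1, e2 be terms with x:ϱ_i ⊢ e_i : τ_i such that x is active in both e1 and e2. If for all (v1, v2) ∈ Q the substituted terms (e1[x↦v1], e2[x↦v2]) are in the stev-closure of R, then for all (e1', e2') in the stev-closure of Q, the terms (e1[x↦e1'], e2[x↦e2']) are in the stev-closure of R. -/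
namespace RecLC

/-! A call-by-value calculus with general recursion (and hence possible divergence):
the term-level core of the ML module calculus, with unit, int, products, functions
and `fix`. -/

inductive Ty : Type where
  | unit : Ty
  | int : Ty
  | tvar (a : ℕ) : Ty
  | prod (t₁ t₂ : Ty) : Ty
  | arrow (t₁ t₂ : Ty) : Ty

inductive Tm : Type where
  | var (x : ℕ) : Tm
  | unitv : Tm
  | lit (n : ℤ) : Tm
  | pair (e₁ e₂ : Tm) : Tm
  | fst (e : Tm) : Tm
  | snd (e : Tm) : Tm
  | lam (x : ℕ) (τ : Ty) (b : Tm) : Tm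
  | app (e₁ e₂ : Tm) : Tm
  | fixp (τ : Ty) (e : Tm) : Tm

def Ty.wf (Δ : Set ℕ) : Ty → Prop
  | .unit => True
  | .int => True
  | .tvar a => a ∈ Δ
  | .prod t₁ t₂ => t₁.wf Δ ∧ t₂.wf Δ
  | .arrow t₁ t₂ => t₁.wf Δ ∧ t₂.wf Δ

def Ty.closed (τ : Ty) : Prop := τ.wf ∅

/-- Simultaneous substitution of (closed) terms for free term variables. -/
def Tm.msubst (γ : ℕ → Option Tm) : Tm → Tm
  | .var x => (γ x).getD (.var x)
  | .unitv => .unitv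
  | .lit n => .lit n
  | .pair e₁ e₂ => .pair (e₁.msubst γ) (e₂.msubst γ)
  | .fst e => .fst (e.msubst γ)
  | .snd e => .snd (e.msubst γ)
  | .lam x τ b => .lam x τ (b.msubst fun y => if y = x then none else γ y)
  | .app e₁ e₂ => .app (e₁.msubst γ) (e₂.msubst γ)
  | .fixp τ e => .fixp τ (e.msubst γ)

/-- `e[x ↦ e']`. -/
def Tm.subst1 (x : ℕ) (v : Tm) (e : Tm) : Tm :=
  e.msubst fun y => if y = x then some v else none

inductive IsValue : Tm → Prop
  | unitv : IsValue .unitv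
  | lit (n : ℤ) : IsValue (.lit n)
  | pair {v₁ v₂ : Tm} : IsValue v₁ → IsValue v₂ → IsValue (.pair v₁ v₂)
  | lam (x : ℕ) (τ : Ty) (b : Tm) : IsValue (.lam x τ b)

inductive Step : Tm → Tm → Prop
  | beta {x τ b v} : IsValue v → Step (.app (.lam x τ b) v) (Tm.subst1 x v b)
  | fstPair {v₁ v₂} : IsValue v₁ → IsValue v₂ → Step (.fst (.pair v₁ v₂)) v₁
  | sndPair {v₁ v₂} : IsValue v₁ → IsValue v₂ → Step (.snd (.pair v₁ v₂)) v₂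
  | fixStep {τ e} : Step (.fixp τ e) (.app e (.lam 0 .unit (.fixp τ e)))
  | pairL {e₁ e₁' e₂} : Step e₁ e₁' → Step (.pair e₁ e₂) (.pair e₁' e₂)
  | pairR {v₁ e₂ e₂'} : IsValue v₁ → Step e₂ e₂' → Step (.pair v₁ e₂) (.pair v₁ e₂')
  | fstC {e e'} : Step e e' → Step (.fst e) (.fst e')
  | sndC {e e'} : Step e e' → Step (.snd e) (.snd e')
  | appL {e₁ e₁' e₂} : Step e₁ e₁' → Step (.app e₁ e₂) (.app e₁' e₂)
  | appR {v₁ e₂ e₂'} : IsValue v₁ → Step e₂ e₂' → Step (.app v₁ e₂) (.app v₁ e₂')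

def Steps : Tm → Tm → Prop := Relation.ReflTransGen Step

abbrev Ctx : Type := ℕ → Option Ty

def Ctx.empty : Ctx := fun _ => none

def Ctx.update (Γ : Ctx) (x : ℕ) (τ : Ty) : Ctx := fun y => if y = x then some τ else Γ y

inductive HasTy : Set ℕ → Ctx → Tm → Ty → Prop
  | var {Δ Γ x τ} : Γ x = some τ → HasTy Δ Γ (.var x) τ
  | unitv {Δ Γ} : HasTy Δ Γ .unitv .unit
  | lit {Δ Γ} (n : ℤ) : HasTy Δ Γ (.lit n) .int
  | pair {Δ Γ e₁ e₂ τ₁ τ₂} : HasTy Δ Γ e₁ τ₁ → HasTy Δ Γ e₂ τ₂ →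
      HasTy Δ Γ (.pair e₁ e₂) (.prod τ₁ τ₂)
  | fst {Δ Γ e τ₁ τ₂} : HasTy Δ Γ e (.prod τ₁ τ₂) → HasTy Δ Γ (.fst e) τ₁
  | snd {Δ Γ e τ₁ τ₂} : HasTy Δ Γ e (.prod τ₁ τ₂) → HasTy Δ Γ (.snd e) τ₂
  | lam {Δ Γ x τ₁ b τ₂} : Ty.wf Δ τ₁ → HasTy Δ (Ctx.update Γ x τ₁) b τ₂ →
      HasTy Δ Γ (.lam x τ₁ b) (.arrow τ₁ τ₂)
  | app {Δ Γ e₁ e₂ τ₁ τ₂} : HasTy Δ Γ e₁ (.arrow τ₁ τ₂) → HasTy Δ Γ e₂ τ₁ →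
      HasTy Δ Γ (.app e₁ e₂) τ₂
  | fixp {Δ Γ τ e} : Ty.wf Δ τ → HasTy Δ Γ e (.arrow (.arrow .unit τ) τ) →
      HasTy Δ Γ (.fixp τ e) τ

def ClosedVal (τ : Ty) (v : Tm) : Prop := IsValue v ∧ HasTy ∅ Ctx.empty v τ

abbrev Rel : Type := Tm → Tm → Prop

/-- `R ∈ Rel(τ₁, τ₂)`: a relation on closed values of closed types. -/
def RelOn (τ₁ τ₂ : Ty) (R : Rel) : Prop :=
  Ty.closed τ₁ ∧ Ty.closed τ₂ ∧
  ∀ v₁ v₂, R v₁ v₂ → ClosedVal τ₁ v₁ ∧ ClosedVal τ₂ v₂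

/-- Termination of evaluation. -/
def Terminates (e : Tm) : Prop := ∃ v, Steps e v ∧ IsValue v

/-- `R^ev` (without the typing side conditions): the pair of terms co-terminates, and
whatever values they reach are related by `R`. -/
def evClo (R : Rel) : Rel := fun e₁ e₂ =>
  (Terminates e₁ ↔ Terminates e₂) ∧
  ∀ v₁ v₂, Steps e₁ v₁ → IsValue v₁ → Steps e₂ v₂ → IsValue v₂ → R v₁ v₂

/-- `R^ev` at types `τ₁, τ₂`. -/
def evCloT (τ₁ τ₂ : Ty) (R : Rel) : Rel := fun e₁ e₂ =>
  HasTy ∅ Ctx.empty e₁ τ₁ ∧ HasTy ∅ Ctx.empty e₂ τ₂ ∧ evClo R e₁ e₂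

/-- `R^s`: pairs of continuations of types `τ₁ → unit`, `τ₂ → unit` that agree on
termination for all `R`-related arguments. -/
def sClo (τ₁ τ₂ : Ty) (R : Rel) : Rel := fun k₁ k₂ =>
  ClosedVal (.arrow τ₁ .unit) k₁ ∧ ClosedVal (.arrow τ₂ .unit) k₂ ∧
  ∀ w₁ w₂, R w₁ w₂ → (Terminates (.app k₁ w₁) ↔ Terminates (.app k₂ w₂))

/-- `S^t`: pairs of values of types `τ₁, τ₂` on which all `S`-related continuations
agree on termination. -/
def tClo (τ₁ τ₂ : Ty) (S : Rel) : Rel := fun w₁ w₂ =>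
  ClosedVal τ₁ w₁ ∧ ClosedVal τ₂ w₂ ∧
  ∀ k₁ k₂, S k₁ k₂ → (Terminates (.app k₁ w₁) ↔ Terminates (.app k₂ w₂))

/-- `R^st`. -/
def stClo (τ₁ τ₂ : Ty) (R : Rel) : Rel := tClo τ₁ τ₂ (sClo τ₁ τ₂ R)

/-- `R` is Pitts closed when `R = R^st`. -/
def PittsClosed (τ₁ τ₂ : Ty) (R : Rel) : Prop :=
  ∀ v₁ v₂, R v₁ v₂ ↔ stClo τ₁ τ₂ R v₁ v₂

/-- The `stev`-closure `(R^st)^ev`. -/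
def stevClo (τ₁ τ₂ : Ty) (R : Rel) : Rel := evCloT τ₁ τ₂ (stClo τ₁ τ₂ R)

/-- `x` is active in `e` (with `x : ϱ ⊢ e : τ`): for every closed `e' : ϱ`, termination
of `e[x ↦ e']` implies termination of `e'`. -/
def Active (x : ℕ) (ϱ : Ty) (e : Tm) : Prop :=
  ∀ e', HasTy ∅ Ctx.empty e' ϱ → Terminates (Tm.subst1 x e' e) → Terminates e'

/-- The logical interpretation `⟦τ⟧ρ` of a type, on values. -/
def Interp (ρ : ℕ → Rel) : Ty → Rel
  | .unit => fun v₁ v₂ => v₁ = .unitv ∧ v₂ = .unitv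
  | .int => fun v₁ v₂ => ∃ n : ℤ, v₁ = .lit n ∧ v₂ = .lit n
  | .tvar a => fun v₁ v₂ => ρ a v₁ v₂
  | .prod t₁ t₂ => fun v₁ v₂ =>
      ∃ a₁ b₁ a₂ b₂, v₁ = .pair a₁ b₁ ∧ v₂ = .pair a₂ b₂ ∧
        Interp ρ t₁ a₁ a₂ ∧ Interp ρ t₂ b₁ b₂
  | .arrow t₁ t₂ => fun v₁ v₂ =>
      ∀ w₁ w₂, Interp ρ t₁ w₁ w₂ → evClo (Interp ρ t₂) (.app v₁ w₁) (.app v₂ w₂)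

/-- The empty environment. -/
def botEnv : ℕ → Rel := fun _ _ _ => False

/-! By activity, `kᵢ (eᵢ[x ↦ eᵢ'])` can only terminate when `eᵢ'` evaluates to a value `vᵢ`,
and then `(v₁, v₂) ∈ Q^st`. Replacing a closed term by its value does not change termination
(a simulation argument, `ReplByVal`), so `eᵢ'` may be replaced by `vᵢ`. For `(k₁, k₂) ∈ R^s`
the hypothesis makes `(λx. k₁ e₁, λx. k₂ e₂)` a pair in `Q^s`, and testing it against
`(v₁, v₂) ∈ Q^st` shows that `k₁ (e₁[x ↦ e₁'])` and `k₂ (e₂[x ↦ e₂'])` co-terminate. Membership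
in `(R^st)^ev` only asks for this, for all `(k₁, k₂) ∈ R^s`: co-termination itself is the case
of the continuation `λ_. ()`. -/

theorem IsValue.not_step {v t : Tm} (hv : IsValue v) : ¬ Step v t := by
  induction hv generalizing t with
  | pair _ _ ih₁ ih₂ =>
    intro h
    cases h with
    | pairL hs => exact ih₁ hs
    | pairR _ hs => exact ih₂ hs
  | _ => rintro ⟨⟩

theorem IsValue.eq_of_steps {v t : Tm} (hv : IsValue v) (h : Steps v t) : v = t := by
  rcases h.cases_head with rfl | ⟨_, hs, _⟩
  · rfl
  · exact absurd hs hv.not_step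

theorem Step.right_unique : Relator.RightUnique Step := by
  intro t a b h₁ h₂
  induction h₁ generalizing b <;> cases h₂ <;>
    first
    | rfl
    | (congr 1; solve_by_elim)
    | (exfalso; exact IsValue.not_step (.lam _ _ _) ‹_›)
    | (exfalso; solve_by_elim [IsValue.not_step, IsValue.pair])

theorem Steps.to_value {a b c : Tm} (hab : Steps a b) (hac : Steps a c) (hc : IsValue c) :
    Steps b c := by
  rcases hab.total_of_right_unique Step.right_unique hac with hbc | hcb
  · exact hbc
  · exact hc.eq_of_steps hcb ▸ .refl

theorem Steps.pairL {a a' b : Tm} (h : Steps a a') : Steps (.pair a b) (.pair a' b) :=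
  h.lift (Tm.pair · b) fun _ _ => .pairL

theorem Steps.pairR {a b b' : Tm} (h : Steps b b') (ha : IsValue a) :
    Steps (.pair a b) (.pair a b') :=
  h.lift (Tm.pair a) fun _ _ => .pairR ha

theorem Steps.fstC {a a' : Tm} (h : Steps a a') : Steps (.fst a) (.fst a') :=
  h.lift Tm.fst fun _ _ => .fstC

theorem Steps.sndC {a a' : Tm} (h : Steps a a') : Steps (.snd a) (.snd a') :=
  h.lift Tm.snd fun _ _ => .sndC

theorem Steps.appL {a a' b : Tm} (h : Steps a a') : Steps (.app a b) (.app a' b) :=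
  h.lift (Tm.app · b) fun _ _ => .appL

theorem Steps.appR {a b b' : Tm} (h : Steps b b') (ha : IsValue a) :
    Steps (.app a b) (.app a b') :=
  h.lift (Tm.app a) fun _ _ => .appR ha

theorem IsValue.terminates {v : Tm} (hv : IsValue v) : Terminates v := ⟨v, .refl, hv⟩

theorem terminates_iff_of_steps {t t' : Tm} (h : Steps t t') : Terminates t ↔ Terminates t' :=
  ⟨fun ⟨u, hu, hv⟩ => ⟨u, h.to_value hu hv, hv⟩, fun ⟨u, hu, hv⟩ => ⟨u, h.trans hu, hv⟩⟩

theorem exists_value_of_steps_app {k m u : Tm} (hk : IsValue k) (h : Steps (.app k m) u)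
    (hu : IsValue u) : ∃ w, IsValue w ∧ Steps m w ∧ Steps (.app k w) u := by
  generalize hkm : Tm.app k m = t at h
  induction h using Relation.ReflTransGen.head_induction_on generalizing m with
  | refl => subst hkm; cases hu
  | head hstep hsteps ih =>
    subst hkm
    cases hstep with
    | beta hm => exact ⟨m, hm, .refl, hsteps.head (.beta hm)⟩
    | appL hs => exact absurd hs hk.not_step
    | appR _ hs =>
      obtain ⟨w, hw, hsw, hwu⟩ := ih rfl
      exact ⟨w, hw, hsw.head hs, hwu⟩

theorem Terminates.of_app {k m : Tm} (hk : IsValue k) (h : Terminates (.app k m)) :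
    Terminates m := by
  obtain ⟨u, hu, huv⟩ := h
  obtain ⟨w, hw, hmw, -⟩ := exists_value_of_steps_app hk hu huv
  exact ⟨w, hmw, hw⟩

theorem HasTy.msubst_eq_self {Δ : Set ℕ} {Γ : Ctx} {e : Tm} {τ : Ty} (h : HasTy Δ Γ e τ)
    {γ : ℕ → Option Tm} (hγ : ∀ y, (Γ y).isSome → γ y = none) : e.msubst γ = e := by
  induction h generalizing γ with
  | var hx => rw [Tm.msubst, hγ _ (by rw [hx]; rfl)]; rfl
  | lam _ _ ih =>
    rw [Tm.msubst, ih]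
    intro y hy
    split_ifs with hyx
    · rfl
    · exact hγ y (by simpa [Ctx.update, hyx] using hy)
  | _ => simp_all [Tm.msubst]

theorem HasTy.subst1_eq_self {Δ : Set ℕ} {e : Tm} {τ : Ty} (h : HasTy Δ Ctx.empty e τ)
    (x : ℕ) (u : Tm) : Tm.subst1 x u e = e :=
  h.msubst_eq_self fun y hy => by simp [Ctx.empty] at hy

theorem HasTy.subst1_app {k e u : Tm} {κ : Ty} (hk : HasTy ∅ Ctx.empty k κ) (x : ℕ) :
    Tm.subst1 x u (.app k e) = .app k (Tm.subst1 x u e) :=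
  congrArg (Tm.app · _) (hk.subst1_eq_self x u)

theorem Ty.wf_mono {Δ Δ' : Set ℕ} {τ : Ty} (h : τ.wf Δ) (hΔ : Δ ⊆ Δ') : τ.wf Δ' := by
  induction τ with
  | tvar a => exact hΔ h
  | prod _ _ ih₁ ih₂ | arrow _ _ ih₁ ih₂ => exact ⟨ih₁ h.1, ih₂ h.2⟩
  | _ => trivial

theorem HasTy.weaken {Δ Δ' : Set ℕ} {Γ Γ' : Ctx} {e : Tm} {τ : Ty} (h : HasTy Δ Γ e τ)
    (hΔ : Δ ⊆ Δ') (hΓ : ∀ y t, Γ y = some t → Γ' y = some t) : HasTy Δ' Γ' e τ := by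
  induction h generalizing Γ' with
  | var hx => exact .var (hΓ _ _ hx)
  | unitv => exact .unitv
  | lit n => exact .lit n
  | pair _ _ ih₁ ih₂ => exact .pair (ih₁ hΓ) (ih₂ hΓ)
  | fst _ ih => exact .fst (ih hΓ)
  | snd _ ih => exact .snd (ih hΓ)
  | @lam _ x _ _ _ hwf _ ih =>
    refine .lam (Ty.wf_mono hwf hΔ) (ih fun y t hy => ?_)
    by_cases hyx : y = x
    · simpa [Ctx.update, hyx] using hy
    · simpa [Ctx.update, hyx] using hΓ y t (by simpa [Ctx.update, hyx] using hy)
  | app _ _ ih₁ ih₂ => exact .app (ih₁ hΓ) (ih₂ hΓ)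
  | fixp hwf _ ih => exact .fixp (Ty.wf_mono hwf hΔ) (ih hΓ)

theorem HasTy.of_empty {Δ : Set ℕ} {Γ : Ctx} {e : Tm} {τ : Ty} (h : HasTy ∅ Ctx.empty e τ) :
    HasTy Δ Γ e τ :=
  h.weaken (Set.empty_subset _) fun _ _ hy => nomatch hy

theorem HasTy.msubst {Δ : Set ℕ} {Γ Γ' : Ctx} {e : Tm} {τ : Ty} (h : HasTy Δ Γ e τ)
    {γ : ℕ → Option Tm}
    (hγ : ∀ y t, Γ y = some t →
      (γ y = none ∧ Γ' y = some t) ∨ ∃ u, γ y = some u ∧ HasTy ∅ Ctx.empty u t) :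
    HasTy Δ Γ' (e.msubst γ) τ := by
  induction h generalizing γ Γ' with
  | var hx =>
    rcases hγ _ _ hx with ⟨hnone, hΓ'⟩ | ⟨u, hu, hty⟩
    · simpa [Tm.msubst, hnone] using HasTy.var hΓ'
    · simpa [Tm.msubst, hu] using hty.of_empty
  | unitv => exact .unitv
  | lit n => exact .lit n
  | pair _ _ ih₁ ih₂ => exact .pair (ih₁ hγ) (ih₂ hγ)
  | fst _ ih => exact .fst (ih hγ)
  | snd _ ih => exact .snd (ih hγ)
  | @lam _ x _ _ _ hwf _ ih =>
    refine .lam hwf (ih fun y t hy => ?_)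
    by_cases hyx : y = x
    · simp_all [Ctx.update]
    · simpa [Ctx.update, hyx] using hγ y t (by simpa [Ctx.update, hyx] using hy)
  | app _ _ ih₁ ih₂ => exact .app (ih₁ hγ) (ih₂ hγ)
  | fixp hwf _ ih => exact .fixp hwf (ih hγ)

theorem HasTy.subst1 {x : ℕ} {ϱ τ : Ty} {e e' : Tm}
    (h : HasTy ∅ (Ctx.update Ctx.empty x ϱ) e τ) (h' : HasTy ∅ Ctx.empty e' ϱ) :
    HasTy ∅ Ctx.empty (Tm.subst1 x e' e) τ :=
  h.msubst fun y t hy => by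
    by_cases hyx : y = x
    · simp_all [Ctx.update]
    · simp [Ctx.update, Ctx.empty, hyx] at hy

theorem HasTy.step {e e' : Tm} {τ : Ty} (ht : HasTy ∅ Ctx.empty e τ) (hs : Step e e') :
    HasTy ∅ Ctx.empty e' τ := by
  induction hs generalizing τ with
  | beta => cases ht with | app h₁ h₂ => cases h₁ with | lam _ hb => exact hb.subst1 h₂
  | fstPair => cases ht with | fst h => cases h with | pair h₁ _ => exact h₁
  | sndPair => cases ht with | snd h => cases h with | pair _ h₂ => exact h₂
  | fixStep =>
    cases ht with | fixp hwf he => exact .app he (.lam trivial (.of_empty (.fixp hwf he)))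
  | pairL _ ih => cases ht with | pair h₁ h₂ => exact .pair (ih h₁) h₂
  | pairR _ _ ih => cases ht with | pair h₁ h₂ => exact .pair h₁ (ih h₂)
  | fstC _ ih => cases ht with | fst h => exact .fst (ih h)
  | sndC _ ih => cases ht with | snd h => exact .snd (ih h)
  | appL _ ih => cases ht with | app h₁ h₂ => exact .app (ih h₁) h₂
  | appR _ _ ih => cases ht with | app h₁ h₂ => exact .app h₁ (ih h₂)

theorem HasTy.steps {e e' : Tm} {τ : Ty} (ht : HasTy ∅ Ctx.empty e τ) (hs : Steps e e') :
    HasTy ∅ Ctx.empty e' τ := by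
  induction hs with
  | refl => exact ht
  | tail _ hstep ih => exact ih.step hstep

/-- `ReplByVal v t s`: `s` is `t` with some subterms that evaluate to `v` replaced by `v`.
The replaced subterms are typed in the empty context, hence closed, so substitution leaves
them alone. -/
inductive ReplByVal (v : Tm) : Tm → Tm → Prop
  | repl {a : Tm} {ϱ : Ty} : Steps a v → HasTy ∅ Ctx.empty a ϱ → ReplByVal v a v
  | var (x : ℕ) : ReplByVal v (.var x) (.var x)
  | unitv : ReplByVal v .unitv .unitv
  | lit (n : ℤ) : ReplByVal v (.lit n) (.lit n)
  | pair {a₁ a₂ b₁ b₂ : Tm} : ReplByVal v a₁ a₂ → ReplByVal v b₁ b₂ →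
      ReplByVal v (.pair a₁ b₁) (.pair a₂ b₂)
  | fst {a₁ a₂ : Tm} : ReplByVal v a₁ a₂ → ReplByVal v (.fst a₁) (.fst a₂)
  | snd {a₁ a₂ : Tm} : ReplByVal v a₁ a₂ → ReplByVal v (.snd a₁) (.snd a₂)
  | lam {b₁ b₂ : Tm} (x : ℕ) (τ : Ty) : ReplByVal v b₁ b₂ →
      ReplByVal v (.lam x τ b₁) (.lam x τ b₂)
  | app {a₁ a₂ b₁ b₂ : Tm} : ReplByVal v a₁ a₂ → ReplByVal v b₁ b₂ →
      ReplByVal v (.app a₁ b₁) (.app a₂ b₂)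
  | fixp {a₁ a₂ : Tm} (τ : Ty) : ReplByVal v a₁ a₂ → ReplByVal v (.fixp τ a₁) (.fixp τ a₂)

namespace ReplByVal

variable {v : Tm}

theorem refl (v t : Tm) : ReplByVal v t t := by
  induction t <;> constructor <;> assumption

theorem msubst {b b' : Tm} (h : ReplByVal v b b') {γ γ' : ℕ → Option Tm}
    (hγ : ∀ y, (γ y = none ∧ γ' y = none) ∨
      ∃ u u', γ y = some u ∧ γ' y = some u' ∧ ReplByVal v u u') :
    ReplByVal v (b.msubst γ) (b'.msubst γ') := by
  induction h generalizing γ γ' with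
  | repl hs ht =>
    rw [ht.msubst_eq_self (by simp [Ctx.empty]),
      (ht.steps hs).msubst_eq_self (by simp [Ctx.empty])]
    exact .repl hs ht
  | var x =>
    rcases hγ x with ⟨h, h'⟩ | ⟨u, u', h, h', hu⟩
    · simpa [Tm.msubst, h, h'] using ReplByVal.var x
    · simpa [Tm.msubst, h, h'] using hu
  | unitv => exact .unitv
  | lit n => exact .lit n
  | pair _ _ ih₁ ih₂ => exact .pair (ih₁ hγ) (ih₂ hγ)
  | fst _ ih => exact .fst (ih hγ)
  | snd _ ih => exact .snd (ih hγ)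
  | lam x τ _ ih =>
    refine .lam x τ (ih fun y => ?_)
    by_cases hyx : y = x
    · simp [hyx]
    · simpa [hyx] using hγ y
  | app _ _ ih₁ ih₂ => exact .app (ih₁ hγ) (ih₂ hγ)
  | fixp τ _ ih => exact .fixp τ (ih hγ)

theorem subst1 {b b' u u' : Tm} (hb : ReplByVal v b b') (hu : ReplByVal v u u') (x : ℕ) :
    ReplByVal v (Tm.subst1 x u b) (Tm.subst1 x u' b') :=
  hb.msubst fun y => by
    by_cases hyx : y = x
    · exact .inr ⟨u, u', by simp [hyx], by simp [hyx], hu⟩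
    · exact .inl ⟨by simp [hyx], by simp [hyx]⟩

theorem exists_value_left (hv : IsValue v) {t s : Tm} (h : ReplByVal v t s) (hs : IsValue s) :
    ∃ t', IsValue t' ∧ Steps t t' ∧ ReplByVal v t' s := by
  induction h with
  | repl hst _ => exact ⟨v, hv, hst, .refl v v⟩
  | unitv => exact ⟨.unitv, .unitv, .refl, .unitv⟩
  | lit n => exact ⟨.lit n, .lit n, .refl, .lit n⟩
  | pair _ _ ih₁ ih₂ =>
    cases hs with
    | pair ha hb =>
      obtain ⟨a, ha, hsa, h₁⟩ := ih₁ ha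
      obtain ⟨b, hb, hsb, h₂⟩ := ih₂ hb
      exact ⟨.pair a b, .pair ha hb, hsa.pairL.trans (hsb.pairR ha), .pair h₁ h₂⟩
  | lam x τ h => exact ⟨_, .lam x τ _, .refl, .lam x τ h⟩
  | _ => cases hs

theorem exists_value_right (hv : IsValue v) {t s : Tm} (h : ReplByVal v t s) (ht : IsValue t) :
    ∃ s', IsValue s' ∧ Steps s s' ∧ ReplByVal v t s' := by
  induction h with
  | repl hst hty => exact ⟨v, hv, .refl, .repl hst hty⟩
  | unitv => exact ⟨.unitv, .unitv, .refl, .unitv⟩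
  | lit n => exact ⟨.lit n, .lit n, .refl, .lit n⟩
  | pair _ _ ih₁ ih₂ =>
    cases ht with
    | pair ha hb =>
      obtain ⟨a, ha, hsa, h₁⟩ := ih₁ ha
      obtain ⟨b, hb, hsb, h₂⟩ := ih₂ hb
      exact ⟨.pair a b, .pair ha hb, hsa.pairL.trans (hsb.pairR ha), .pair h₁ h₂⟩
  | lam x τ h => exact ⟨_, .lam x τ _, .refl, .lam x τ h⟩
  | _ => cases ht

theorem exists_pair_right (hv : IsValue v) {a₁ b₁ s : Tm} (h : ReplByVal v (.pair a₁ b₁) s)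
    (ha : IsValue a₁) (hb : IsValue b₁) : ∃ a₂ b₂, IsValue a₂ ∧ IsValue b₂ ∧
      Steps s (.pair a₂ b₂) ∧ ReplByVal v a₁ a₂ ∧ ReplByVal v b₁ b₂ := by
  obtain ⟨w, hw, hsw, h'⟩ := h.exists_value_right hv (.pair ha hb)
  cases h' with
  | repl hst _ =>
    obtain rfl := (IsValue.pair ha hb).eq_of_steps hst
    exact ⟨a₁, b₁, ha, hb, hsw, .refl _ _, .refl _ _⟩
  | pair h₁ h₂ => cases hw with | pair ha₂ hb₂ => exact ⟨_, _, ha₂, hb₂, hsw, h₁, h₂⟩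

theorem exists_pair_left (hv : IsValue v) {t a₂ b₂ : Tm} (h : ReplByVal v t (.pair a₂ b₂))
    (ha : IsValue a₂) (hb : IsValue b₂) : ∃ a₁ b₁, IsValue a₁ ∧ IsValue b₁ ∧
      Steps t (.pair a₁ b₁) ∧ ReplByVal v a₁ a₂ ∧ ReplByVal v b₁ b₂ := by
  obtain ⟨w, hw, htw, h'⟩ := h.exists_value_left hv (.pair ha hb)
  cases h' with
  | repl hst _ =>
    obtain rfl := hw.eq_of_steps hst
    exact ⟨a₂, b₂, ha, hb, htw, .refl _ _, .refl _ _⟩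
  | pair h₁ h₂ => cases hw with | pair ha₁ hb₁ => exact ⟨_, _, ha₁, hb₁, htw, h₁, h₂⟩

theorem lam_left {x : ℕ} {τ : Ty} {b s : Tm} (h : ReplByVal v (.lam x τ b) s) :
    ∃ b', s = .lam x τ b' ∧ ReplByVal v b b' := by
  cases h with
  | repl hst _ =>
    obtain rfl := (IsValue.lam x τ b).eq_of_steps hst
    exact ⟨b, rfl, .refl _ _⟩
  | lam _ _ h => exact ⟨_, rfl, h⟩

theorem lam_right {x : ℕ} {τ : Ty} {t b' : Tm} (h : ReplByVal v t (.lam x τ b')) :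
    ∃ b, Steps t (.lam x τ b) ∧ ReplByVal v b b' := by
  cases h with
  | repl hst _ => exact ⟨b', hst, .refl _ _⟩
  | lam _ _ h => exact ⟨_, .refl, h⟩

theorem step_left (hv : IsValue v) {t s : Tm} (h : ReplByVal v t s) :
    ∀ {t'}, Step t t' → ∃ s', Steps s s' ∧ ReplByVal v t' s' := by
  induction h with
  | repl hst hty =>
    intro t' hs
    rcases hst.cases_head with rfl | ⟨a', ha', hst'⟩
    · exact absurd hs hv.not_step
    · obtain rfl := Step.right_unique hs ha'
      exact ⟨v, .refl, .repl hst' (hty.step hs)⟩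
  | pair h₁ h₂ ih₁ ih₂ =>
    intro _ hs
    cases hs with
    | pairL hs =>
      obtain ⟨s', hs', h'⟩ := ih₁ hs
      exact ⟨_, hs'.pairL, .pair h' h₂⟩
    | pairR ha hs =>
      obtain ⟨a', ha', hsa, h₁'⟩ := h₁.exists_value_right hv ha
      obtain ⟨s', hs', h'⟩ := ih₂ hs
      exact ⟨_, hsa.pairL.trans (hs'.pairR ha'), .pair h₁' h'⟩
  | fst h ih =>
    intro _ hs
    cases hs with
    | fstPair ha hb =>
      obtain ⟨a₂, b₂, ha₂, hb₂, hs, ha', -⟩ := h.exists_pair_right hv ha hb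
      exact ⟨a₂, hs.fstC.tail (.fstPair ha₂ hb₂), ha'⟩
    | fstC hs =>
      obtain ⟨s', hs', h'⟩ := ih hs
      exact ⟨_, hs'.fstC, .fst h'⟩
  | snd h ih =>
    intro _ hs
    cases hs with
    | sndPair ha hb =>
      obtain ⟨a₂, b₂, ha₂, hb₂, hs, -, hb'⟩ := h.exists_pair_right hv ha hb
      exact ⟨b₂, hs.sndC.tail (.sndPair ha₂ hb₂), hb'⟩
    | sndC hs =>
      obtain ⟨s', hs', h'⟩ := ih hs
      exact ⟨_, hs'.sndC, .snd h'⟩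
  | app h₁ h₂ ih₁ ih₂ =>
    intro _ hs
    cases hs with
    | @beta x _ _ _ hw =>
      obtain ⟨b', rfl, hb⟩ := h₁.lam_left
      obtain ⟨_, hw', hsw, h₂'⟩ := h₂.exists_value_right hv hw
      exact ⟨_, (hsw.appR (.lam _ _ _)).tail (.beta hw'), hb.subst1 h₂' x⟩
    | appL hs =>
      obtain ⟨s', hs', h'⟩ := ih₁ hs
      exact ⟨_, hs'.appL, .app h' h₂⟩
    | appR ha hs =>
      obtain ⟨a', ha', hsa, h₁'⟩ := h₁.exists_value_right hv ha
      obtain ⟨s', hs', h'⟩ := ih₂ hs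
      exact ⟨_, hsa.appL.trans (hs'.appR ha'), .app h₁' h'⟩
  | fixp τ h =>
    intro _ hs
    cases hs
    exact ⟨_, .single .fixStep, .app h (.lam 0 .unit (.fixp τ h))⟩
  | _ => intro _ hs; cases hs

theorem step_right (hv : IsValue v) {t s : Tm} (h : ReplByVal v t s) :
    ∀ {s'}, Step s s' → ∃ t', Steps t t' ∧ ReplByVal v t' s' := by
  induction h with
  | repl => exact fun hs => absurd hs hv.not_step
  | pair h₁ h₂ ih₁ ih₂ =>
    intro _ hs
    cases hs with
    | pairL hs =>
      obtain ⟨t', ht', h'⟩ := ih₁ hs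
      exact ⟨_, ht'.pairL, .pair h' h₂⟩
    | pairR ha hs =>
      obtain ⟨a', ha', hta, h₁'⟩ := h₁.exists_value_left hv ha
      obtain ⟨t', ht', h'⟩ := ih₂ hs
      exact ⟨_, hta.pairL.trans (ht'.pairR ha'), .pair h₁' h'⟩
  | fst h ih =>
    intro _ hs
    cases hs with
    | fstPair ha hb =>
      obtain ⟨a₁, b₁, ha₁, hb₁, ht, ha', -⟩ := h.exists_pair_left hv ha hb
      exact ⟨a₁, ht.fstC.tail (.fstPair ha₁ hb₁), ha'⟩
    | fstC hs =>
      obtain ⟨t', ht', h'⟩ := ih hs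
      exact ⟨_, ht'.fstC, .fst h'⟩
  | snd h ih =>
    intro _ hs
    cases hs with
    | sndPair ha hb =>
      obtain ⟨a₁, b₁, ha₁, hb₁, ht, -, hb'⟩ := h.exists_pair_left hv ha hb
      exact ⟨b₁, ht.sndC.tail (.sndPair ha₁ hb₁), hb'⟩
    | sndC hs =>
      obtain ⟨t', ht', h'⟩ := ih hs
      exact ⟨_, ht'.sndC, .snd h'⟩
  | app h₁ h₂ ih₁ ih₂ =>
    intro _ hs
    cases hs with
    | @beta x _ _ _ hw =>
      obtain ⟨b, htb, hb⟩ := h₁.lam_right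
      obtain ⟨_, hw', htw, h₂'⟩ := h₂.exists_value_left hv hw
      exact ⟨_, (htb.appL.trans (htw.appR (.lam _ _ _))).tail (.beta hw'), hb.subst1 h₂' x⟩
    | appL hs =>
      obtain ⟨t', ht', h'⟩ := ih₁ hs
      exact ⟨_, ht'.appL, .app h' h₂⟩
    | appR ha hs =>
      obtain ⟨a', ha', hta, h₁'⟩ := h₁.exists_value_left hv ha
      obtain ⟨t', ht', h'⟩ := ih₂ hs
      exact ⟨_, hta.appL.trans (ht'.appR ha'), .app h₁' h'⟩
  | fixp τ h =>
    intro _ hs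
    cases hs
    exact ⟨_, .single .fixStep, .app h (.lam 0 .unit (.fixp τ h))⟩
  | _ => intro _ hs; cases hs

theorem steps_left (hv : IsValue v) {t t' s : Tm} (h : ReplByVal v t s) (ht : Steps t t') :
    ∃ s', Steps s s' ∧ ReplByVal v t' s' := by
  induction ht with
  | refl => exact ⟨s, .refl, h⟩
  | tail _ hstep ih =>
    obtain ⟨s₀, hs₀, h₀⟩ := ih
    obtain ⟨s₁, hs₁, h₁⟩ := h₀.step_left hv hstep
    exact ⟨s₁, hs₀.trans hs₁, h₁⟩

theorem steps_right (hv : IsValue v) {t s s' : Tm} (h : ReplByVal v t s) (hs : Steps s s') :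
    ∃ t', Steps t t' ∧ ReplByVal v t' s' := by
  induction hs with
  | refl => exact ⟨t, .refl, h⟩
  | tail _ hstep ih =>
    obtain ⟨t₀, ht₀, h₀⟩ := ih
    obtain ⟨t₁, ht₁, h₁⟩ := h₀.step_right hv hstep
    exact ⟨t₁, ht₀.trans ht₁, h₁⟩

theorem terminates_iff (hv : IsValue v) {t s : Tm} (h : ReplByVal v t s) :
    Terminates t ↔ Terminates s := by
  constructor
  · rintro ⟨u, htu, hu⟩
    obtain ⟨s', hss', h'⟩ := h.steps_left hv htu
    obtain ⟨s'', hs'', hs's'', -⟩ := h'.exists_value_right hv hu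
    exact ⟨s'', hss'.trans hs's'', hs''⟩
  · rintro ⟨u, hsu, hu⟩
    obtain ⟨t', htt', h'⟩ := h.steps_right hv hsu
    obtain ⟨t'', ht'', ht't'', -⟩ := h'.exists_value_left hv hu
    exact ⟨t'', htt'.trans ht't'', ht''⟩

end ReplByVal

theorem terminates_subst1_iff_of_steps {e' v : Tm} {ϱ : Ty} (hv : IsValue v) (hs : Steps e' v)
    (hty : HasTy ∅ Ctx.empty e' ϱ) (x : ℕ) (t : Tm) :
    Terminates (Tm.subst1 x e' t) ↔ Terminates (Tm.subst1 x v t) :=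
  ((ReplByVal.refl v t).subst1 (.repl hs hty) x).terminates_iff hv

theorem terminates_app_lam_app_iff {k e w : Tm} {κ ϱ : Ty} {x : ℕ}
    (hk : HasTy ∅ Ctx.empty k κ) (hw : IsValue w) :
    Terminates (.app (.lam x ϱ (.app k e)) w) ↔ Terminates (.app k (Tm.subst1 x w e)) := by
  rw [← hk.subst1_app x]
  exact terminates_iff_of_steps (.single (.beta hw))

def Tm.constUnit (τ : Ty) : Tm := .lam 0 τ .unitv

theorem terminates_app_constUnit_iff {τ : Ty} {m : Tm} :
    Terminates (.app (Tm.constUnit τ) m) ↔ Terminates m :=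
  ⟨.of_app (.lam _ _ _), fun ⟨_, hmw, hw⟩ =>
    ⟨.unitv, (hmw.appR (.lam _ _ _)).tail (.beta hw), .unitv⟩⟩

theorem sClo_constUnit {τ₁ τ₂ : Ty} {R : Rel} (hR : RelOn τ₁ τ₂ R) :
    sClo τ₁ τ₂ R (Tm.constUnit τ₁) (Tm.constUnit τ₂) := by
  refine ⟨⟨.lam _ _ _, .lam hR.1 .unitv⟩, ⟨.lam _ _ _, .lam hR.2.1 .unitv⟩, fun w₁ w₂ hw => ?_⟩
  simp only [terminates_app_constUnit_iff]
  exact iff_of_true (hR.2.2 w₁ w₂ hw).1.1.terminates (hR.2.2 w₁ w₂ hw).2.1.terminates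

theorem terminates_app_iff_of_sClo_of_evClo {τ₁ τ₂ : Ty} {R : Rel} {k₁ k₂ m₁ m₂ : Tm}
    (hk : sClo τ₁ τ₂ R k₁ k₂) (hm : evClo (stClo τ₁ τ₂ R) m₁ m₂) :
    Terminates (.app k₁ m₁) ↔ Terminates (.app k₂ m₂) := by
  by_cases h₁ : Terminates m₁
  · obtain ⟨w₁, hmw₁, hw₁⟩ := h₁
    obtain ⟨w₂, hmw₂, hw₂⟩ := hm.1.mp ⟨w₁, hmw₁, hw₁⟩
    rw [terminates_iff_of_steps (hmw₁.appR hk.1.1), terminates_iff_of_steps (hmw₂.appR hk.2.1.1)]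
    exact (hm.2 w₁ w₂ hmw₁ hw₁ hmw₂ hw₂).2.2 k₁ k₂ hk
  · exact iff_of_false (mt (.of_app hk.1.1) h₁) (mt (.of_app hk.2.1.1) (hm.1.not.mp h₁))

theorem stevClo_of_terminates_app_iff {τ₁ τ₂ : Ty} {R : Rel} (hR : RelOn τ₁ τ₂ R) {m₁ m₂ : Tm}
    (ht₁ : HasTy ∅ Ctx.empty m₁ τ₁) (ht₂ : HasTy ∅ Ctx.empty m₂ τ₂)
    (h : ∀ k₁ k₂, sClo τ₁ τ₂ R k₁ k₂ → (Terminates (.app k₁ m₁) ↔ Terminates (.app k₂ m₂))) :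
    stevClo τ₁ τ₂ R m₁ m₂ := by
  refine ⟨ht₁, ht₂, ?_, fun u₁ u₂ hs₁ hu₁ hs₂ hu₂ =>
    ⟨⟨hu₁, ht₁.steps hs₁⟩, ⟨hu₂, ht₂.steps hs₂⟩, fun k₁ k₂ hk => ?_⟩⟩
  · simpa only [terminates_app_constUnit_iff] using h _ _ (sClo_constUnit hR)
  · rw [← terminates_iff_of_steps (hs₁.appR hk.1.1), ← terminates_iff_of_steps (hs₂.appR hk.2.1.1)]
    exact h k₁ k₂ hk

section Lifting

variable {ϱ₁ ϱ₂ τ₁ τ₂ : Ty} {Q R : Rel} {x : ℕ} {e₁ e₂ k₁ k₂ : Tm}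

theorem sClo_lam_app (hQ : RelOn ϱ₁ ϱ₂ Q)
    (h₁ : HasTy ∅ (Ctx.update Ctx.empty x ϱ₁) e₁ τ₁)
    (h₂ : HasTy ∅ (Ctx.update Ctx.empty x ϱ₂) e₂ τ₂)
    (hyp : ∀ v₁ v₂, Q v₁ v₂ → evClo (stClo τ₁ τ₂ R) (Tm.subst1 x v₁ e₁) (Tm.subst1 x v₂ e₂))
    (hk : sClo τ₁ τ₂ R k₁ k₂) :
    sClo ϱ₁ ϱ₂ Q (.lam x ϱ₁ (.app k₁ e₁)) (.lam x ϱ₂ (.app k₂ e₂)) := by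
  obtain ⟨hϱ₁, hϱ₂, hQv⟩ := hQ
  refine ⟨⟨.lam _ _ _, .lam hϱ₁ (.app hk.1.2.of_empty h₁)⟩,
    ⟨.lam _ _ _, .lam hϱ₂ (.app hk.2.1.2.of_empty h₂)⟩, fun w₁ w₂ hw => ?_⟩
  rw [terminates_app_lam_app_iff hk.1.2 (hQv w₁ w₂ hw).1.1,
    terminates_app_lam_app_iff hk.2.1.2 (hQv w₁ w₂ hw).2.1]
  exact terminates_app_iff_of_sClo_of_evClo hk (hyp w₁ w₂ hw)

theorem terminates_app_subst1_iff_of_stevClo (hQ : RelOn ϱ₁ ϱ₂ Q)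
    (h₁ : HasTy ∅ (Ctx.update Ctx.empty x ϱ₁) e₁ τ₁)
    (h₂ : HasTy ∅ (Ctx.update Ctx.empty x ϱ₂) e₂ τ₂)
    (ha₁ : Active x ϱ₁ e₁) (ha₂ : Active x ϱ₂ e₂)
    (hyp : ∀ v₁ v₂, Q v₁ v₂ → evClo (stClo τ₁ τ₂ R) (Tm.subst1 x v₁ e₁) (Tm.subst1 x v₂ e₂))
    (hk : sClo τ₁ τ₂ R k₁ k₂) {e₁' e₂' : Tm} (he : stevClo ϱ₁ ϱ₂ Q e₁' e₂') :
    Terminates (.app k₁ (Tm.subst1 x e₁' e₁)) ↔ Terminates (.app k₂ (Tm.subst1 x e₂' e₂)) := by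
  obtain ⟨hty₁, hty₂, hco, hval⟩ := he
  by_cases h : Terminates e₁'
  · obtain ⟨v₁, hs₁, hv₁⟩ := h
    obtain ⟨v₂, hs₂, hv₂⟩ := hco.mp ⟨v₁, hs₁, hv₁⟩
    have hrepl₁ := terminates_subst1_iff_of_steps hv₁ hs₁ hty₁ x (.app k₁ e₁)
    have hrepl₂ := terminates_subst1_iff_of_steps hv₂ hs₂ hty₂ x (.app k₂ e₂)
    simp only [hk.1.2.subst1_app, hk.2.1.2.subst1_app] at hrepl₁ hrepl₂
    rw [hrepl₁, hrepl₂, ← terminates_app_lam_app_iff hk.1.2 hv₁,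
      ← terminates_app_lam_app_iff hk.2.1.2 hv₂]
    exact (hval v₁ v₂ hs₁ hv₁ hs₂ hv₂).2.2 _ _ (sClo_lam_app hQ h₁ h₂ hyp hk)
  · exact iff_of_false (fun ht => h (ha₁ e₁' hty₁ (ht.of_app hk.1.1)))
      (fun ht => hco.not.mp h (ha₂ e₂' hty₂ (ht.of_app hk.2.1.1)))

end Lifting

/-- Monadic-lifting lemma for closures: let `Q ∈ Rel(ϱ₁, ϱ₂)` and
`R ∈ Rel(τ₁, τ₂)`, and let `e₁, e₂` be terms with `x:ϱᵢ ⊢ eᵢ : τᵢ` such that `x` is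
active in both.  If for all `(v₁, v₂) ∈ Q` the substituted terms
`(e₁[x↦v₁], e₂[x↦v₂])` are in the `stev`-closure of `R`, then for all `(e₁', e₂')`
in the `stev`-closure of `Q`, the terms `(e₁[x↦e₁'], e₂[x↦e₂'])` are in the
`stev`-closure of `R`. -/
theorem monadic_lifting
    (ϱ₁ ϱ₂ τ₁ τ₂ : Ty) (Q R : Rel)
    (hQ : RelOn ϱ₁ ϱ₂ Q) (hR : RelOn τ₁ τ₂ R)
    (x : ℕ) (e₁ e₂ : Tm)
    (h₁ : HasTy ∅ (Ctx.update Ctx.empty x ϱ₁) e₁ τ₁)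
    (h₂ : HasTy ∅ (Ctx.update Ctx.empty x ϱ₂) e₂ τ₂)
    (ha₁ : Active x ϱ₁ e₁) (ha₂ : Active x ϱ₂ e₂)
    (hyp : ∀ v₁ v₂, Q v₁ v₂ → stevClo τ₁ τ₂ R (Tm.subst1 x v₁ e₁) (Tm.subst1 x v₂ e₂)) :
    ∀ e₁' e₂', stevClo ϱ₁ ϱ₂ Q e₁' e₂' →
      stevClo τ₁ τ₂ R (Tm.subst1 x e₁' e₁) (Tm.subst1 x e₂' e₂) := by
  intro e₁' e₂' he
  exact stevClo_of_terminates_app_iff hR (h₁.subst1 he.1) (h₂.subst1 he.2.1) fun k₁ k₂ hk =>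
    terminates_app_subst1_iff_of_stevClo hQ h₁ h₂ ha₁ ha₂ (fun v₁ v₂ hv => (hyp v₁ v₂ hv).2.2) hk he

end RecLC
end
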